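/- arXiv:2104.04094 — 8 statements merged into one kernel-verified Lean document; each statement's English description precedes it below -/
import Mathlib

section
/- In the group L = L(p_1,…,p_t), every element y⃗ admits a unique normal form: there exist unique a ∈ ℤ and integers a_1,…,a_t with 0 ≤ a_i ≤ p_i − 1 for all i such that y⃗ = a·c⃗ + a_1·x⃗_1 + ⋯ + a_t·x⃗_t. -/
open scoped BigOperators

namespace WPL

/-- The rank-one abelian group `L(p₁,…,p_t)`: the quotient of `ℤ^t` by the
subgroup generated by the elements `p 0 • e 0 - p i • e i`. -/
def rel (t : ℕ) [NeZero t] (p : Fin t → ℕ) : Submodule ℤ (Fin t → ℤ) :=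
  Submodule.span ℤ
    { v | ∃ i : Fin t, v = (p 0 : ℤ) • Pi.single (0 : Fin t) (1 : ℤ) - (p i : ℤ) • Pi.single i (1 : ℤ) }

/-- The group `L(p₁,…,p_t)`. -/
abbrev L (t : ℕ) [NeZero t] (p : Fin t → ℕ) : Type :=
  (Fin t → ℤ) ⧸ rel t p

/-- The generator `x⃗ᵢ` of `L`. -/
def xg (t : ℕ) [NeZero t] (p : Fin t → ℕ) (i : Fin t) : L t p :=
  Submodule.Quotient.mk (Pi.single i (1 : ℤ))

/-- The canonical element `c⃗ = p₁ • x⃗₁`. -/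
noncomputable def cg (t : ℕ) [NeZero t] (p : Fin t → ℕ) : L t p :=
  (p 0 : ℤ) • xg t p 0

/-- `y ∈ L_+`, i.e. `y ≥ 0`: `y` is an ℕ-linear combination of the `x⃗ᵢ`. -/
def pos (t : ℕ) [NeZero t] (p : Fin t → ℕ) (y : L t p) : Prop :=
  ∃ a : Fin t → ℕ, y = ∑ i, (a i : ℤ) • xg t p i

/-- The dualizing element `w⃗ = (t-2) • c⃗ - ∑ x⃗ᵢ`. -/
noncomputable def wg (t : ℕ) [NeZero t] (p : Fin t → ℕ) : L t p :=
  ((t : ℤ) - 2) • cg t p - ∑ i, xg t p i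

/-- The dominant element `δ⃗ = c⃗ + 2 • w⃗`. -/
noncomputable def dg (t : ℕ) [NeZero t] (p : Fin t → ℕ) : L t p :=
  cg t p + 2 • wg t p

end WPL

namespace WPLAux
open WPL

variable (t : ℕ) [NeZero t] (p : Fin t → ℕ)

lemma smul_xg (i : Fin t) : (p i : ℤ) • xg t p i = cg t p := by
  have h : (p 0 : ℤ) • Pi.single (0 : Fin t) (1 : ℤ) - (p i : ℤ) • Pi.single i (1 : ℤ) ∈ rel t p :=
    Submodule.subset_span ⟨i, rfl⟩
  unfold cg xg
  rw [← Submodule.Quotient.mk_smul, ← Submodule.Quotient.mk_smul, Submodule.Quotient.eq]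
  simpa using Submodule.neg_mem _ h

lemma mk_eq_sum (v : Fin t → ℤ) :
    (Submodule.Quotient.mk v : L t p) = ∑ i, v i • xg t p i := by
  have hv : v = ∑ i, v i • Pi.single i (1 : ℤ) := by
    conv_lhs => rw [← Finset.univ_sum_single v]
    refine Finset.sum_congr rfl fun i _ => ?_
    rw [← Pi.single_smul, smul_eq_mul, mul_one]
  calc (Submodule.Quotient.mk v : L t p) = (rel t p).mkQ v := rfl
    _ = (rel t p).mkQ (∑ i, v i • Pi.single i (1 : ℤ)) := by rw [← hv]
    _ = ∑ i, v i • xg t p i := by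
        rw [map_sum]
        exact Finset.sum_congr rfl fun i _ => by rw [map_smul]; rfl

/-- the ℤ-valued functional -/
noncomputable def F : (Fin t → ℤ) →ₗ[ℤ] ℤ :=
  ∑ i, ((∏ j, (p j : ℤ)) / (p i : ℤ)) • LinearMap.proj i

lemma F_single (hp : ∀ i, 2 ≤ p i) (i : Fin t) :
    F t p (Pi.single i (1 : ℤ)) = (∏ j, (p j : ℤ)) / (p i : ℤ) := by
  simp [F, Pi.single_apply, Finset.sum_ite_eq', mul_ite]

lemma pi_mul_div (hp : ∀ i, 2 ≤ p i) (i : Fin t) :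
    (p i : ℤ) * ((∏ j, (p j : ℤ)) / (p i : ℤ)) = ∏ j, (p j : ℤ) := by
  exact Int.mul_ediv_cancel' (Finset.dvd_prod_of_mem _ (Finset.mem_univ i))

lemma F_ker (hp : ∀ i, 2 ≤ p i) : rel t p ≤ LinearMap.ker (F t p) := by
  rw [rel, Submodule.span_le]
  rintro v ⟨i, rfl⟩
  simp only [SetLike.mem_coe, LinearMap.mem_ker, map_sub, map_smul, F_single t p hp,
    smul_eq_mul]
  rw [pi_mul_div t p hp, pi_mul_div t p hp, sub_self]

noncomputable def Fl (hp : ∀ i, 2 ≤ p i) : L t p →ₗ[ℤ] ℤ :=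
  Submodule.liftQ (rel t p) (F t p) (F_ker t p hp)

lemma Fl_xg (hp : ∀ i, 2 ≤ p i) (i : Fin t) :
    Fl t p hp (xg t p i) = (∏ j, (p j : ℤ)) / (p i : ℤ) := by
  rw [xg, Fl]
  exact F_single t p hp i

lemma Fl_cg (hp : ∀ i, 2 ≤ p i) :
    Fl t p hp (cg t p) = ∏ j, (p j : ℤ) := by
  rw [cg, map_smul, Fl_xg t p hp, smul_eq_mul, pi_mul_div t p hp]

/-- the mod-pᵢ functional -/
noncomputable def G (i : Fin t) : (Fin t → ℤ) →ₗ[ℤ] ZMod (p i) :=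
  (Int.castRingHom (ZMod (p i))).toIntLinearMap.comp (LinearMap.proj i)

lemma G_single (i j : Fin t) :
    G t p i (Pi.single j (1 : ℤ)) = if i = j then 1 else 0 := by
  simp [G, Pi.single_apply]

lemma G_ker (i : Fin t) : rel t p ≤ LinearMap.ker (G t p i) := by
  rw [rel, Submodule.span_le]
  rintro v ⟨j, rfl⟩
  rw [SetLike.mem_coe, LinearMap.mem_ker, map_sub, map_smul, map_smul, G_single, G_single]
  rcases eq_or_ne i 0 with h0 | h0 <;> rcases eq_or_ne i j with hj | hj <;>
    subst_vars <;>
    simp_all [zsmul_eq_mul, Int.cast_natCast, ZMod.natCast_self, eq_comm]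

noncomputable def Gl (i : Fin t) : L t p →ₗ[ℤ] ZMod (p i) :=
  Submodule.liftQ (rel t p) (G t p i) (G_ker t p i)

lemma Gl_xg (i j : Fin t) :
    Gl t p i (xg t p j) = if i = j then 1 else 0 := G_single t p i j

lemma Gl_cg (i : Fin t) : Gl t p i (cg t p) = 0 := by
  rw [cg, map_smul, Gl_xg]
  rcases eq_or_ne i 0 with h | h
  · subst h; simp [zsmul_eq_mul, Int.cast_natCast, ZMod.natCast_self]
  · simp [h]

end WPLAux

open WPL in
/-- every element of `L` has a unique normal form
`y = a • c⃗ + ∑ aᵢ • x⃗ᵢ` with `0 ≤ aᵢ ≤ pᵢ - 1`. -/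
theorem normal_form_exists_unique
    (t : ℕ) [NeZero t] (ht : 3 ≤ t) (p : Fin t → ℕ) (hp : ∀ i, 2 ≤ p i)
    (y : L t p) :
    ∃! q : ℤ × (Fin t → ℤ),
      (∀ i, 0 ≤ q.2 i ∧ q.2 i ≤ (p i : ℤ) - 1) ∧
        y = q.1 • cg t p + ∑ i, q.2 i • xg t p i := by
  classical
  obtain ⟨v, rfl⟩ := Submodule.Quotient.mk_surjective (rel t p) y
  have hpi : ∀ i, (0:ℤ) < (p i : ℤ) := fun i => by
    have := hp i; exact_mod_cast Nat.lt_of_lt_of_le Nat.zero_lt_two this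
  set N : ℤ := ∏ j, (p j : ℤ) with hN
  have hNpos : 0 < N := Finset.prod_pos fun i _ => hpi i
  -- computation of Gl on normal forms
  have comp : ∀ (b : ℤ) (s : Fin t → ℤ) (i : Fin t),
      WPLAux.Gl t p i (b • cg t p + ∑ j, s j • xg t p j) = ((s i : ℤ) : ZMod (p i)) := by
    intro b s i
    rw [map_add, map_smul, WPLAux.Gl_cg, smul_zero, zero_add, map_sum]
    simp only [map_smul, WPLAux.Gl_xg, smul_ite, smul_zero]
    rw [Finset.sum_ite_eq]
    simp [zsmul_eq_mul]
  -- the chosen normal form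
  have key : ∀ i, v i • xg t p i
      = (v i / (p i:ℤ)) • cg t p + (v i % (p i:ℤ)) • xg t p i := by
    intro i
    conv_lhs => rw [← Int.mul_ediv_add_emod (v i) (p i : ℤ)]
    rw [add_smul, mul_comm, mul_smul, WPLAux.smul_xg]
  have hrepr : (Submodule.Quotient.mk v : L t p)
      = (∑ i, v i / (p i:ℤ)) • cg t p + ∑ i, (v i % (p i:ℤ)) • xg t p i := by
    rw [WPLAux.mk_eq_sum, Finset.sum_congr rfl fun i _ => key i,
      Finset.sum_add_distrib, ← Finset.sum_smul]
  refine ⟨(∑ i, v i / (p i:ℤ), fun i => v i % (p i:ℤ)), ⟨?_, hrepr⟩, ?_⟩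
  · intro i
    exact ⟨Int.emod_nonneg _ (hpi i).ne',
      Int.le_sub_one_iff.mpr (Int.emod_lt_of_pos (v i) (hpi i))⟩
  · rintro ⟨b, s⟩ ⟨hbnd, heq⟩
    have hs : s = fun i => v i % (p i:ℤ) := by
      funext i
      have h1 : ((s i : ℤ) : ZMod (p i)) = (((v i % (p i:ℤ)) : ℤ) : ZMod (p i)) := by
        have := congrArg (WPLAux.Gl t p i) (heq.symm.trans hrepr)
        rwa [comp, comp] at this
      have h2 : s i % (p i:ℤ) = (v i % (p i:ℤ)) % (p i:ℤ) :=
        (ZMod.intCast_eq_intCast_iff' _ _ _).mp h1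
      have h3 : s i % (p i:ℤ) = s i :=
        Int.emod_eq_of_lt (hbnd i).1 (Int.le_sub_one_iff.mp (hbnd i).2)
      have h4 : (v i % (p i:ℤ)) % (p i:ℤ) = v i % (p i:ℤ) :=
        Int.emod_eq_of_lt (Int.emod_nonneg _ (hpi i).ne') (Int.emod_lt_of_pos _ (hpi i))
      omega
    have hb : b = ∑ i, v i / (p i:ℤ) := by
      rw [hs] at heq
      have hcc : b • cg t p = (∑ i, v i / (p i:ℤ)) • cg t p :=
        add_right_cancel (heq.symm.trans hrepr)
      have := congrArg (WPLAux.Fl t p hp) hcc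
      rw [map_smul, map_smul, WPLAux.Fl_cg, smul_eq_mul, smul_eq_mul] at this
      exact mul_right_cancel₀ hNpos.ne' this
    simp only [Prod.mk.injEq]
    exact ⟨hb, hs⟩
end

section
/- An element y⃗ of L with normal form y⃗ = a·c⃗ + Σ_{i=1}^t a_i·x⃗_i (a ∈ ℤ, 0 ≤ a_i ≤ p_i − 1) satisfies y⃗ ≥ 0, i.e. y⃗ lies in L_+ = ℕ·x⃗_1 + ⋯ + ℕ·x⃗_t, if and only if a ≥ 0. -/
open scoped BigOperators

section Aux
open WPL

lemma WPLaux.sum_single_apply (t : ℕ) (c : Fin t → ℤ) (j : Fin t) :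
    (∑ i, c i • Pi.single i (1:ℤ)) j = c j := by
  simp [Finset.sum_apply, Pi.single_apply, mul_ite]

lemma WPLaux.mem_rel_iff (t : ℕ) [NeZero t] (p : Fin t → ℕ) (w : Fin t → ℤ) :
    w ∈ rel t p ↔ ∃ c : Fin t → ℤ, (∀ i, w i = (p i : ℤ) * c i) ∧ ∑ i, c i = 0 := by
  constructor
  · intro hw
    induction hw using Submodule.span_induction with
    | mem v hv =>
      obtain ⟨i, rfl⟩ := hv
      refine ⟨Pi.single 0 1 - Pi.single i 1, fun j => ?_, by simp⟩
      simp only [Pi.sub_apply, Pi.smul_apply, smul_eq_mul, Pi.single_apply, mul_ite, mul_one,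
        mul_zero]
      split_ifs <;> subst_vars <;> ring
    | zero => exact ⟨0, by simp, by simp⟩
    | add v w _ _ hv hw =>
      obtain ⟨c, hc, hcs⟩ := hv; obtain ⟨d, hd, hds⟩ := hw
      exact ⟨c + d, fun i => by simp [hc i, hd i, mul_add],
        by simp [Finset.sum_add_distrib, hcs, hds]⟩
    | smul a v _ hv =>
      obtain ⟨c, hc, hcs⟩ := hv
      refine ⟨a • c, fun i => by simp [hc i]; ring, ?_⟩
      simp [← Finset.mul_sum, hcs]
  · rintro ⟨c, hc, hcs⟩
    have hw : w = (∑ i, (-c i) •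
        ((p 0:ℤ) • Pi.single (0:Fin t) (1:ℤ) - (p i:ℤ) • Pi.single i (1:ℤ)) : Fin t → ℤ) := by
      funext j
      rw [hc j, Finset.sum_apply]
      simp only [Pi.smul_apply, Pi.sub_apply, smul_eq_mul, Pi.single_apply, mul_ite, mul_one,
        mul_zero, mul_sub]
      rw [Finset.sum_sub_distrib, Finset.sum_ite_eq]
      simp only [Finset.mem_univ, if_true]
      by_cases h0 : j = 0
      · rw [h0]
        simp only [eq_self_iff_true, if_true]
        have h2 : ∑ x : Fin t, -(c x * (p 0:ℤ)) = -((∑ x : Fin t, c x) * (p 0:ℤ)) := by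
          rw [Finset.sum_neg_distrib, Finset.sum_mul]
        simp only [mul_neg, neg_mul] at h2 ⊢
        rw [h2, hcs]
        ring
      · simp [h0, mul_comm]
    rw [hw]
    exact Submodule.sum_mem _ fun i _ =>
      Submodule.smul_mem _ _ (Submodule.subset_span ⟨i, rfl⟩)

lemma WPLaux.mk_eq_sum (t : ℕ) [NeZero t] (p : Fin t → ℕ) (c : Fin t → ℤ) :
    (Submodule.Quotient.mk c : L t p) = ∑ i, c i • xg t p i := by
  have h : c = ∑ i, c i • Pi.single i (1:ℤ) := by
    funext j; rw [WPLaux.sum_single_apply]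
  calc (Submodule.Quotient.mk c : L t p) = (rel t p).mkQ c := rfl
    _ = (rel t p).mkQ (∑ i, c i • Pi.single i (1:ℤ)) := by rw [← h]
    _ = ∑ i, c i • (rel t p).mkQ (Pi.single i (1:ℤ)) := by
      rw [map_sum]
      exact Finset.sum_congr rfl fun i _ => map_smul _ _ _
    _ = ∑ i, c i • xg t p i := rfl

end Aux

open WPL in
/-- an element with normal form `a • c⃗ + ∑ aᵢ • x⃗ᵢ` is in `L₊`
iff `a ≥ 0`. -/
theorem pos_iff_normal_form_coeff_nonneg
    (t : ℕ) [NeZero t] (ht : 3 ≤ t) (p : Fin t → ℕ) (hp : ∀ i, 2 ≤ p i)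
    (y : L t p) (a : ℤ) (coef : Fin t → ℤ)
    (hcoef : ∀ i, 0 ≤ coef i ∧ coef i ≤ (p i : ℤ) - 1)
    (hy : y = a • cg t p + ∑ i, coef i • xg t p i) :
    pos t p y ↔ 0 ≤ a := by
  set u : Fin t → ℤ := fun j => (if j = 0 then a * (p 0 : ℤ) else 0) + coef j with hu
  have hyu : y = Submodule.Quotient.mk u := by
    rw [hy, WPLaux.mk_eq_sum t p u]
    have : ∑ i, u i • xg t p i
        = ∑ i, ((if i = 0 then a * (p 0 : ℤ) else 0) • xg t p i + coef i • xg t p i) := by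
      refine Finset.sum_congr rfl fun i _ => ?_
      rw [hu, add_smul]
    rw [this, Finset.sum_add_distrib]
    congr 1
    have h2 : ∑ i, (if i = 0 then a * (p 0 : ℤ) else 0) • xg t p i
        = (a * (p 0 : ℤ)) • xg t p 0 := by
      rw [Finset.sum_eq_single (0 : Fin t)]
      · simp
      · intro b _ hb; simp [hb]
      · simp
    rw [h2, cg, smul_smul]
  constructor
  · rintro ⟨b, hb⟩
    have hmem : (fun j => (b j : ℤ)) - u ∈ rel t p := by
      rw [← Submodule.Quotient.eq]
      rw [← hyu, hb, WPLaux.mk_eq_sum t p (fun j => (b j : ℤ))]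
    obtain ⟨c, hc, hcs⟩ := (WPLaux.mem_rel_iff t p _).mp hmem
    set d : Fin t → ℤ := fun i => c i + if i = 0 then a else 0 with hd
    have hpd : ∀ i, (p i : ℤ) * d i = (b i : ℤ) - coef i := by
      intro i
      have := hc i
      simp only [Pi.sub_apply, hu] at this
      rw [hd]
      by_cases h0 : i = 0
      · subst h0; simp only [eq_self_iff_true, if_true] at this ⊢
        ring_nf; ring_nf at this; linarith
      · simp only [if_neg h0] at this ⊢; linarith [this]
    have hdnn : ∀ i, 0 ≤ d i := by
      intro i
      by_contra hneg
      push_neg at hneg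
      have h1 : d i ≤ -1 := by omega
      have h2 : (p i : ℤ) * d i ≤ (p i : ℤ) * (-1) := by
        apply mul_le_mul_of_nonneg_left h1
        exact_mod_cast Nat.zero_le _
      have h3 : (0 : ℤ) ≤ (b i : ℤ) := Int.natCast_nonneg _
      have h4 := (hcoef i).2
      have := hpd i
      omega
    have hsum : ∑ i, d i = a := by
      rw [hd]
      rw [Finset.sum_add_distrib, hcs, zero_add]
      rw [Finset.sum_eq_single (0 : Fin t)]
      · simp
      · intro b _ hb; simp [hb]
      · simp
    rw [← hsum]
    exact Finset.sum_nonneg fun i _ => hdnn i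
  · intro ha
    have hun : ∀ j, 0 ≤ u j := by
      intro j
      rw [hu]
      have := (hcoef j).1
      by_cases h0 : j = 0
      · subst h0; simp only [eq_self_iff_true, if_true]
        have h2 : 0 ≤ a * (p 0 : ℤ) := mul_nonneg ha (Int.natCast_nonneg _)
        linarith
      · simp only [if_neg h0]; linarith
    refine ⟨fun j => (u j).toNat, ?_⟩
    rw [hyu, WPLaux.mk_eq_sum t p u]
    refine Finset.sum_congr rfl fun i _ => ?_
    rw [Int.toNat_of_nonneg (hun i)]
end

section
/- If y⃗ ∈ L satisfies y⃗ ≥ 0 and z⃗ ∈ L satisfies 0 ≤ z⃗ ≤ c⃗, then z⃗ + w⃗ − y⃗ ≱ 0 (i.e. z⃗ + w⃗ − y⃗ does not lie in L_+). -/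
open scoped BigOperators

/-!
If `z⃗ + w⃗ - y⃗ ≥ 0`, then adding `y⃗ ≥ 0` and `c⃗ - z⃗ ≥ 0` shows that
`c⃗ + w⃗ = (t-1) c⃗ - ∑ x⃗ᵢ` is nonnegative, i.e. `∑ (aⱼ + 1) x⃗ⱼ = (t-1) c⃗` for some `a ∈ ℕ^t`.
Every relation of `L` has the form `∑ pⱼ kⱼ eⱼ` with `∑ kⱼ = 0`, so this forces
`aⱼ + 1 = pⱼ kⱼ` with `∑ kⱼ = t - 1`; but `pⱼ kⱼ > 0` gives `kⱼ ≥ 1`, hence `∑ kⱼ ≥ t`.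
-/

namespace WPL

variable {t : ℕ} [NeZero t] {p : Fin t → ℕ}

lemma exists_eq_mul_and_sum_eq_zero_of_mem_rel {v : Fin t → ℤ} (hv : v ∈ rel t p) :
    ∃ k : Fin t → ℤ, (∀ j, v j = p j * k j) ∧ ∑ j, k j = 0 := by
  induction hv using Submodule.span_induction with
  | mem v hv =>
    obtain ⟨i, rfl⟩ := hv
    refine ⟨Pi.single 0 1 - Pi.single i 1, fun j => ?_, by simp⟩
    simp only [Pi.sub_apply, Pi.smul_apply, Pi.single_apply, smul_eq_mul]
    split_ifs <;> simp_all
  | zero => exact ⟨0, by simp, by simp⟩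
  | add u v _ _ hu hv =>
    obtain ⟨k, hk, hk0⟩ := hu
    obtain ⟨k', hk', hk0'⟩ := hv
    exact ⟨k + k', fun j => by simp [hk, hk', mul_add], by simp [Finset.sum_add_distrib, hk0, hk0']⟩
  | smul c v _ hv =>
    obtain ⟨k, hk, hk0⟩ := hv
    exact ⟨c • k, fun j => by rw [Pi.smul_apply, hk, smul_eq_mul, Pi.smul_apply, smul_eq_mul]; ring, by simp [← Finset.mul_sum, hk0]⟩

lemma sum_zsmul_xg (a : Fin t → ℤ) :
    ∑ i, a i • xg t p i = Submodule.Quotient.mk a := by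
  conv_rhs => rw [pi_eq_sum_univ' a]
  simp only [xg, ← Submodule.mkQ_apply, ← map_zsmul, ← map_sum]

lemma exists_eq_mul_and_sum_eq_of_mk_eq_zsmul_cg {a : Fin t → ℤ} {l : ℤ}
    (h : (Submodule.Quotient.mk a : L t p) = l • cg t p) :
    ∃ k : Fin t → ℤ, (∀ j, a j = p j * k j) ∧ ∑ j, k j = l := by
  have hrel : a - (l * p 0) • Pi.single 0 1 ∈ rel t p := by
    rw [← Submodule.Quotient.mk_eq_zero, Submodule.Quotient.mk_sub, h, cg, xg, smul_smul,
      ← Submodule.Quotient.mk_smul, sub_self]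
  obtain ⟨k, hk, hk0⟩ := exists_eq_mul_and_sum_eq_zero_of_mem_rel hrel
  refine ⟨k + Pi.single 0 l, fun j => ?_, by simp [Finset.sum_add_distrib, hk0]⟩
  rcases eq_or_ne j 0 with rfl | hj
  · simp only [Pi.add_apply, Pi.single_eq_same]
    linear_combination (by simpa using hk 0 : a 0 - l * p 0 = p 0 * k 0)
  · simpa [hj] using hk j

lemma pos_add {y z : L t p} (hy : pos t p y) (hz : pos t p z) : pos t p (y + z) := by
  obtain ⟨a, rfl⟩ := hy
  obtain ⟨b, rfl⟩ := hz
  exact ⟨a + b, by simp [add_smul, Finset.sum_add_distrib]⟩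

lemma not_pos_cg_add_wg : ¬ pos t p (cg t p + wg t p) := by
  rintro ⟨a, ha⟩
  have hmk : (Submodule.Quotient.mk (fun j => (a j : ℤ) + 1) : L t p) = ((t : ℤ) - 1) • cg t p := by
    rw [← sum_zsmul_xg]
    simp only [add_smul, one_smul, Finset.sum_add_distrib, ← ha, wg]
    module
  obtain ⟨k, hk, hsum⟩ := exists_eq_mul_and_sum_eq_of_mk_eq_zsmul_cg hmk
  have hk_one_le : ∀ j, 1 ≤ k j := fun j => Order.one_le_iff_pos.mpr <|
    pos_of_mul_pos_right (by rw [← hk j]; positivity) (Int.natCast_nonneg _)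
  have : (t : ℤ) ≤ ∑ j, k j := by
    simpa using Finset.sum_le_sum (s := Finset.univ) fun j _ => hk_one_le j
  omega

end WPL

open WPL in
theorem not_pos_add_w_sub_general
    (t : ℕ) [NeZero t] (p : Fin t → ℕ)
    (y z : L t p) (hy : pos t p y) (hzc : pos t p (cg t p - z)) :
    ¬ pos t p (z + wg t p - y) := by
  intro h
  have hcw : cg t p + wg t p = y + (z + wg t p - y) + (cg t p - z) := by abel
  exact not_pos_cg_add_wg (hcw ▸ pos_add (pos_add hy h) hzc)

open WPL in
/-- if `y⃗ ≥ 0` and `0 ≤ z⃗ ≤ c⃗` then `z⃗ + w⃗ - y⃗ ≱ 0`. -/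
theorem not_pos_add_w_sub
    (t : ℕ) [NeZero t] (ht : 3 ≤ t) (p : Fin t → ℕ) (hp : ∀ i, 2 ≤ p i)
    (y z : L t p) (hy : pos t p y) (hz : pos t p z) (hzc : pos t p (cg t p - z)) :
    ¬ pos t p (z + wg t p - y) :=
  not_pos_add_w_sub_general t p y z hy hzc
end

section
/- Let I ⊆ {1,…,t} with #I = 3, and let x⃗ = Σ_{i∈I} l_i·x⃗_i + Σ_{j∉I} (p_j−1)·x⃗_j with integers 0 ≤ l_i ≤ p_i − 2 for i ∈ I. Then for every i ∈ I the identity 2·w⃗ + 2·(1+l_i)·x⃗_i − x⃗ = l_i·x⃗_i + Σ_{j∈I∖{i}} (p_j−2−l_j)·x⃗_j + Σ_{j∉I} (p_j−1)·x⃗_j holds in L; the right-hand side is a normal form (with c⃗-coefficient 0) in which exactly t−3 of the coefficients equal p_j−1 (namely those with j ∉ I), and moreover 0 ≤ 2·w⃗ + 2·(1+l_i)·x⃗_i − x⃗ ≤ δ⃗. -/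
set_option maxHeartbeats 1000000


open scoped BigOperators

open WPL

lemma sum_smul_xg (t : ℕ) [NeZero t] (p : Fin t → ℕ) (A : Fin t → ℤ) :
    ∑ j, A j • xg t p j = (Submodule.Quotient.mk A : L t p) := by
  have h : ∑ j, A j • (Pi.single j (1:ℤ) : Fin t → ℤ) = A := by
    ext k
    simp [Pi.single_apply, Finset.sum_apply]
  calc ∑ j, A j • xg t p j
      = ∑ j, (rel t p).mkQ (A j • Pi.single j (1:ℤ)) :=
        Finset.sum_congr rfl (fun j _ => by rw [xg, ← Submodule.mkQ_apply, ← map_smul])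
    _ = (rel t p).mkQ (∑ j, A j • Pi.single j (1:ℤ)) :=
        (map_sum ((rel t p).mkQ) (fun j => A j • Pi.single j (1:ℤ)) Finset.univ).symm
    _ = Submodule.Quotient.mk A := by rw [h, Submodule.mkQ_apply]

lemma gen_sum_apply (t : ℕ) [NeZero t] (p : Fin t → ℕ) (m : Fin t → ℤ) (k : Fin t) :
    (∑ j, m j • ((p 0 : ℤ) • Pi.single (0 : Fin t) (1 : ℤ) - (p j : ℤ) • Pi.single j (1 : ℤ)) : Fin t → ℤ) k
      = (∑ j, m j) * p 0 * (if k = 0 then 1 else 0) - m k * p k := by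
  simp [Finset.sum_apply, Pi.single_apply, mul_sub, Finset.sum_sub_distrib, eq_comm,
    Finset.sum_mul, mul_ite]

lemma mk_eq_of (t : ℕ) [NeZero t] (p : Fin t → ℕ) (a b m : Fin t → ℤ)
    (h : a - b = ∑ j, m j • ((p 0 : ℤ) • Pi.single (0 : Fin t) (1 : ℤ) - (p j : ℤ) • Pi.single j (1 : ℤ))) :
    (Submodule.Quotient.mk a : L t p) = Submodule.Quotient.mk b := by
  rw [Submodule.Quotient.eq, h]
  exact Submodule.sum_smul_mem _ m (fun j _ => Submodule.subset_span ⟨j, rfl⟩)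


open WPL in
/-- the identity
`2w⃗ + 2(1+lᵢ)x⃗ᵢ - x⃗ = lᵢ x⃗ᵢ + ∑_{j∈I∖{i}} (pⱼ-2-lⱼ) x⃗ⱼ + ∑_{j∉I} (pⱼ-1) x⃗ⱼ`,
the right-hand side being a normal form (with `c⃗`-coefficient 0) in which exactly
the `t-3` coefficients with `j ∉ I` equal `pⱼ - 1`, and
`0 ≤ 2w⃗ + 2(1+lᵢ)x⃗ᵢ - x⃗ ≤ δ⃗`. -/
theorem extension_bundle_data_identity
    (t : ℕ) [NeZero t] (ht : 3 ≤ t) (p : Fin t → ℕ) (hp : ∀ i, 2 ≤ p i)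
    (I : Finset (Fin t)) (hI : I.card = 3)
    (l : Fin t → ℤ) (hl : ∀ i ∈ I, 0 ≤ l i ∧ l i ≤ (p i : ℤ) - 2)
    (xv : L t p)
    (hxv : xv = ∑ i ∈ I, l i • xg t p i + ∑ j ∈ Iᶜ, ((p j : ℤ) - 1) • xg t p j)
    (i : Fin t) (hi : i ∈ I)
    (coef : Fin t → ℤ)
    (hcoef : ∀ j, coef j =
      if j = i then l i else if j ∈ I then (p j : ℤ) - 2 - l j else (p j : ℤ) - 1) :
    2 • wg t p + (2 * (1 + l i)) • xg t p i - xv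
        = l i • xg t p i + ∑ j ∈ I \ {i}, ((p j : ℤ) - 2 - l j) • xg t p j
            + ∑ j ∈ Iᶜ, ((p j : ℤ) - 1) • xg t p j ∧
    2 • wg t p + (2 * (1 + l i)) • xg t p i - xv = ∑ j, coef j • xg t p j ∧
    (∀ j, 0 ≤ coef j ∧ coef j ≤ (p j : ℤ) - 1) ∧
    Finset.univ.filter (fun j => coef j = (p j : ℤ) - 1) = Iᶜ ∧
    (Finset.univ.filter (fun j => coef j = (p j : ℤ) - 1)).card = t - 3 ∧
    pos t p (2 • wg t p + (2 * (1 + l i)) • xg t p i - xv) ∧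
    pos t p (dg t p - (2 • wg t p + (2 * (1 + l i)) • xg t p i - xv)) := by
  classical
  -- vector-level descriptions
  set wv : Fin t → ℤ := fun k => ((t:ℤ) - 2) * p 0 * (if k = 0 then 1 else 0) - 1 with hwvdef
  set g : Fin t → ℤ := fun k => if k ∈ I then l k else (p k : ℤ) - 1 with hgdef
  set funA : Fin t → ℤ :=
    (2:ℤ) • wv + (2 * (1 + l i)) • Pi.single i (1:ℤ) - g with hfunAdef
  have h2smul : (2:ℕ) • wg t p = (2:ℤ) • wg t p := by
    rw [two_smul, two_smul]
  have hc : cg t p = Submodule.Quotient.mk ((p 0 : ℤ) • Pi.single (0 : Fin t) (1:ℤ)) := by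
    rw [cg, xg, Submodule.Quotient.mk_smul]
  have hw : wg t p = Submodule.Quotient.mk wv := by
    have h1 : ∑ j, xg t p j = (Submodule.Quotient.mk (fun _ => (1:ℤ)) : L t p) := by
      rw [← sum_smul_xg]
      exact Finset.sum_congr rfl fun j _ => (one_smul ℤ _).symm
    rw [wg, hc, h1, ← Submodule.Quotient.mk_smul, ← Submodule.Quotient.mk_sub]
    congr 1
    ext k
    simp [wv, Pi.single_apply]
  have hxv' : xv = Submodule.Quotient.mk g := by
    rw [hxv, ← sum_smul_xg, ← Finset.sum_add_sum_compl I (fun j => g j • xg t p j)]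
    congr 1
    · exact Finset.sum_congr rfl fun j hj => by simp [g, hj]
    · refine Finset.sum_congr rfl fun j hj => ?_
      rw [Finset.mem_compl] at hj
      simp [g, hj]
  have hLHS : 2 • wg t p + (2 * (1 + l i)) • xg t p i - xv
      = Submodule.Quotient.mk funA := by
    rw [h2smul, hw, hxv', xg, ← Submodule.Quotient.mk_smul, ← Submodule.Quotient.mk_smul,
      ← Submodule.Quotient.mk_add, ← Submodule.Quotient.mk_sub]
  -- the main congruence move
  set m : Fin t → ℤ := fun j => if j = i then 0 else if j ∈ I then 1 else 2 with hmdef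
  have hmsum : ∑ j, m j = 2 * ((t:ℤ) - 2) := by
    rw [← Finset.sum_add_sum_compl I]
    have e1 : ∑ j ∈ I, m j = 2 := by
      rw [← Finset.add_sum_erase I m hi]
      have : ∑ j ∈ I.erase i, m j = ∑ j ∈ I.erase i, 1 := by
        refine Finset.sum_congr rfl fun j hj => ?_
        rcases Finset.mem_erase.mp hj with ⟨hne, hjI⟩
        simp [m, hne, hjI]
      rw [this, Finset.sum_const, Finset.card_erase_of_mem hi, hI]
      simp [m]
    have e2 : ∑ j ∈ Iᶜ, m j = 2 * ((t:ℤ) - 3) := by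
      have : ∑ j ∈ Iᶜ, m j = ∑ j ∈ Iᶜ, 2 := by
        refine Finset.sum_congr rfl fun j hj => ?_
        rw [Finset.mem_compl] at hj
        have hne : j ≠ i := fun h => hj (h ▸ hi)
        simp [m, hne, hj]
      rw [this, Finset.sum_const, Finset.card_compl, hI, Fintype.card_fin]
      have : ((t - 3 : ℕ) : ℤ) = (t : ℤ) - 3 := by omega
      rw [nsmul_eq_mul, this]
      ring
    rw [e1, e2]; ring
  have hdiff : funA - coef
      = ∑ j, m j • ((p 0 : ℤ) • Pi.single (0 : Fin t) (1 : ℤ)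
          - (p j : ℤ) • Pi.single j (1 : ℤ)) := by
    ext k
    rw [Pi.sub_apply, gen_sum_apply, hmsum, hcoef k]
    rcases eq_or_ne k i with rfl | hki
    · simp [funA, wv, g, m, Pi.single_apply, hi]
      first | (split_ifs <;> ring) | ring
    · by_cases hkI : k ∈ I <;>
        · simp [funA, wv, g, m, Pi.single_apply, hki, hkI]
          first | (split_ifs <;> ring) | ring
  have hmk : (Submodule.Quotient.mk funA : L t p) = Submodule.Quotient.mk coef :=
    mk_eq_of t p _ _ m hdiff
  have goal2 : 2 • wg t p + (2 * (1 + l i)) • xg t p i - xv = ∑ j, coef j • xg t p j := by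
    rw [hLHS, hmk, sum_smul_xg]
  have cbound : ∀ j, 0 ≤ coef j ∧ coef j ≤ (p j : ℤ) - 1 := by
    intro j
    rw [hcoef j]
    split_ifs with h1 h2
    · subst h1
      have := hl j hi
      have := hp j
      omega
    · have := hl j h2
      have := hp j
      omega
    · have := hp j
      omega
  have hsplit : ∑ j, coef j • xg t p j
      = l i • xg t p i + ∑ j ∈ I \ {i}, ((p j : ℤ) - 2 - l j) • xg t p j
          + ∑ j ∈ Iᶜ, ((p j : ℤ) - 1) • xg t p j := by
    rw [← Finset.sum_add_sum_compl I (fun j => coef j • xg t p j)]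
    congr 1
    · rw [← Finset.add_sum_erase I _ hi, hcoef i, if_pos rfl]
      congr 1
      refine Finset.sum_congr (Finset.erase_eq I i) fun j hj => ?_
      rw [Finset.mem_sdiff, Finset.mem_singleton] at hj
      rw [hcoef j, if_neg hj.2, if_pos hj.1]
    · refine Finset.sum_congr rfl fun j hj => ?_
      rw [Finset.mem_compl] at hj
      have hne : j ≠ i := fun h => hj (h ▸ hi)
      rw [hcoef j, if_neg hne, if_neg hj]
  have goal4 : Finset.univ.filter (fun j => coef j = (p j : ℤ) - 1) = Iᶜ := by
    ext j
    simp only [Finset.mem_filter, Finset.mem_univ, true_and, Finset.mem_compl, hcoef j]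
    split_ifs with h1 h2
    · subst h1
      exact iff_of_false (by have := hl j hi; omega) (by simpa using hi)
    · exact iff_of_false (by have := hl j h2; omega) (by simpa using h2)
    · exact iff_of_true rfl h2
  refine ⟨goal2.trans hsplit, goal2, cbound, goal4, ?_, ?_, ?_⟩
  · rw [goal4, Finset.card_compl, hI, Fintype.card_fin]
  · refine ⟨fun j => (coef j).toNat, ?_⟩
    rw [goal2]
    exact Finset.sum_congr rfl fun j _ => by rw [Int.toNat_of_nonneg (cbound j).1]
  · -- δ - LHS
    set coef2 : Fin t → ℤ :=
      fun j => if j = i then (p i : ℤ) - 2 - l i else if j ∈ I then l j else (p j : ℤ) - 1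
      with hc2def
    set dv : Fin t → ℤ := (p 0 : ℤ) • Pi.single (0 : Fin t) (1:ℤ) + (2:ℤ) • wv with hdvdef
    have hdg : dg t p = Submodule.Quotient.mk dv := by
      rw [dg, hc, h2smul, hw, ← Submodule.Quotient.mk_smul, ← Submodule.Quotient.mk_add]
    have hD : dg t p - (2 • wg t p + (2 * (1 + l i)) • xg t p i - xv)
        = Submodule.Quotient.mk (dv - funA) := by
      rw [hdg, hLHS, ← Submodule.Quotient.mk_sub]
    set m2 : Fin t → ℤ := fun j => if j = i then 1 else 0 with hm2def
    have hm2sum : ∑ j, m2 j = 1 := by simp [m2]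
    have hdiff2 : (dv - funA) - coef2
        = ∑ j, m2 j • ((p 0 : ℤ) • Pi.single (0 : Fin t) (1 : ℤ)
            - (p j : ℤ) • Pi.single j (1 : ℤ)) := by
      ext k
      rw [Pi.sub_apply, Pi.sub_apply, gen_sum_apply, hm2sum]
      rcases eq_or_ne k i with rfl | hki
      · simp [dv, funA, wv, g, coef2, m2, Pi.single_apply, hi]
        first | (split_ifs <;> ring) | ring
      · by_cases hkI : k ∈ I <;>
          · simp [dv, funA, wv, g, coef2, m2, Pi.single_apply, hki, hkI]
            first | (split_ifs <;> ring) | ring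
    have hmk2 : (Submodule.Quotient.mk (dv - funA) : L t p) = Submodule.Quotient.mk coef2 :=
      mk_eq_of t p _ _ m2 hdiff2
    have c2bound : ∀ j, 0 ≤ coef2 j := by
      intro j
      simp only [coef2]
      split_ifs with h1 h2
      · have := hl i hi; omega
      · exact (hl j h2).1
      · have := hp j; omega
    refine ⟨fun j => (coef2 j).toNat, ?_⟩
    rw [hD, hmk2, ← sum_smul_xg]
    exact Finset.sum_congr rfl fun j _ => by rw [Int.toNat_of_nonneg (c2bound j)]
end

section
/- Let x⃗ = Σ_{i=1}^t l_i·x⃗_i with integers 0 ≤ l_i ≤ p_i − 1. Then the two conditions x⃗ ≤ δ⃗ and 2·w⃗ − x⃗ ≱ 0 hold simultaneously if and only if exactly t−3 of the indices i ∈ {1,…,t} satisfy l_i = p_i − 1. -/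
open scoped BigOperators

namespace WPL

lemma mem_rel_iff (t : ℕ) [NeZero t] (p : Fin t → ℕ) (v : Fin t → ℤ) :
    v ∈ rel t p ↔ ∃ c : Fin t → ℤ, (∀ i, v i = (p i : ℤ) * c i) ∧ ∑ i, c i = 0 := by
  constructor
  · intro hv
    induction hv using Submodule.span_induction with
    | mem x hx =>
      obtain ⟨i, rfl⟩ := hx
      by_cases h0 : i = 0
      · exact ⟨0, by subst h0; simp, by simp⟩
      · refine ⟨Pi.single 0 1 - Pi.single i 1, fun j => ?_, by
          simp [Finset.sum_sub_distrib, Finset.sum_pi_single]⟩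
        simp only [Pi.sub_apply, Pi.smul_apply, smul_eq_mul, Pi.single_apply]
        by_cases hj0 : j = 0 <;> by_cases hji : j = i <;>
          simp_all <;> ring
    | zero => exact ⟨0, by simp, by simp⟩
    | add x y _ _ hx hy =>
      obtain ⟨c, hc1, hc2⟩ := hx
      obtain ⟨d, hd1, hd2⟩ := hy
      exact ⟨c + d, fun i => by simp [hc1 i, hd1 i]; ring, by
        simp [Finset.sum_add_distrib, hc2, hd2]⟩
    | smul z x _ hx =>
      obtain ⟨c, hc1, hc2⟩ := hx
      exact ⟨z • c, fun i => by simp [hc1 i]; ring, by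
        simp [← Finset.mul_sum, hc2]⟩
  · rintro ⟨c, hc1, hc2⟩
    have hrep : v = ∑ i, (-c i) • ((p 0 : ℤ) • Pi.single (0 : Fin t) (1 : ℤ) - (p i : ℤ) • Pi.single i (1 : ℤ)) := by
      funext j
      simp only [Finset.sum_apply, Pi.smul_apply, Pi.sub_apply, smul_eq_mul, Pi.single_apply]
      have e1 : ∀ x : Fin t, -c x * (((p 0 : ℤ) * if j = 0 then 1 else 0) - (p x : ℤ) * if j = x then 1 else 0)
          = -(c x * ((p 0 : ℤ) * if j = 0 then 1 else 0)) + (if j = x then (p x : ℤ) * c x else 0) := by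
        intro x; split <;> split <;> simp_all <;> ring
      rw [Finset.sum_congr rfl fun x _ => e1 x, Finset.sum_add_distrib, Finset.sum_ite_eq]
      have e2 : ∑ x : Fin t, -(c x * ((p 0 : ℤ) * if j = 0 then 1 else 0))
          = -((∑ x : Fin t, c x) * ((p 0 : ℤ) * if j = 0 then 1 else 0)) := by
        rw [Finset.sum_mul]; rw [← Finset.sum_neg_distrib]
      rw [e2, hc2]
      simp [hc1 j]
    rw [hrep]
    exact Submodule.sum_mem _ fun i _ => Submodule.smul_mem _ _ (Submodule.subset_span ⟨i, rfl⟩)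


lemma sum_smul_xg (t : ℕ) [NeZero t] (p : Fin t → ℕ) (f : Fin t → ℤ) :
    ∑ i, f i • xg t p i = Submodule.Quotient.mk f := by
  have : ∀ i, f i • xg t p i = (rel t p).mkQ (Pi.single i (f i)) := by
    intro i
    rw [xg, ← Submodule.mkQ_apply, ← map_smul]
    congr 1
    funext j
    simp [Pi.single_apply]
  rw [Finset.sum_congr rfl fun i _ => this i, ← map_sum, Finset.univ_sum_single]
  rfl


lemma pos_mk_iff (t : ℕ) [NeZero t] (p : Fin t → ℕ) (u : Fin t → ℤ) :
    pos t p (Submodule.Quotient.mk u) ↔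
      ∃ a : Fin t → ℕ, ∃ c : Fin t → ℤ, (∀ i, u i - (a i : ℤ) = (p i : ℤ) * c i) ∧ ∑ i, c i = 0 := by
  unfold pos
  constructor
  · rintro ⟨a, ha⟩
    rw [sum_smul_xg] at ha
    rw [Submodule.Quotient.eq] at ha
    rw [mem_rel_iff] at ha
    obtain ⟨c, hc1, hc2⟩ := ha
    exact ⟨a, c, fun i => by simpa using hc1 i, hc2⟩
  · rintro ⟨a, c, hc1, hc2⟩
    refine ⟨a, ?_⟩
    rw [sum_smul_xg, Submodule.Quotient.eq, mem_rel_iff]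
    exact ⟨c, fun i => by simpa using hc1 i, hc2⟩


lemma dg_sub (t : ℕ) [NeZero t] (p : Fin t → ℕ) (l : Fin t → ℤ) :
    dg t p - (∑ i, l i • xg t p i) =
      Submodule.Quotient.mk (fun j => (if j = 0 then (2 * (t : ℤ) - 3) * (p 0 : ℤ) else 0) - 2 - l j) := by
  have hx : ∀ (f : Fin t → ℤ), ∑ i, f i • xg t p i = (rel t p).mkQ f := sum_smul_xg t p
  have hone : ∑ i, xg t p i = (rel t p).mkQ (fun _ => 1) := by
    rw [← hx (fun _ => 1)]; simp
  rw [dg, wg, cg, xg, hone, hx l]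
  rw [show (Submodule.Quotient.mk (Pi.single (0:Fin t) (1:ℤ)) : L t p) = (rel t p).mkQ (Pi.single 0 1) from rfl]
  rw [← map_smul, ← map_smul, ← map_sub, ← map_nsmul, ← map_add, ← map_sub,
    ← Submodule.mkQ_apply (rel t p)]
  congr 1
  funext j
  by_cases h : j = 0 <;> simp [h, Pi.single_apply] <;> ring


lemma wg2_sub (t : ℕ) [NeZero t] (p : Fin t → ℕ) (l : Fin t → ℤ) :
    2 • wg t p - (∑ i, l i • xg t p i) =
      Submodule.Quotient.mk (fun j => (if j = 0 then (2 * (t : ℤ) - 4) * (p 0 : ℤ) else 0) - 2 - l j) := by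
  have hx : ∀ (f : Fin t → ℤ), ∑ i, f i • xg t p i = (rel t p).mkQ f := sum_smul_xg t p
  have hone : ∑ i, xg t p i = (rel t p).mkQ (fun _ => 1) := by
    rw [← hx (fun _ => 1)]; simp
  rw [wg, cg, hone, hx l]
  rw [show (xg t p 0 : L t p) = (rel t p).mkQ (Pi.single 0 1) from rfl]
  rw [← map_smul, ← map_smul, ← map_sub, ← map_nsmul, ← map_sub,
    ← Submodule.mkQ_apply (rel t p)]
  congr 1
  funext j
  by_cases h : j = 0 <;> simp [h, Pi.single_apply] <;> ring

lemma key_lemma (t : ℕ) [NeZero t] (p : Fin t → ℕ) (hp : ∀ i, 2 ≤ p i)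
    (l : Fin t → ℤ) (hl : ∀ i, 0 ≤ l i ∧ l i ≤ (p i : ℤ) - 1) (M : ℤ) :
    (∃ a : Fin t → ℕ, ∃ c : Fin t → ℤ,
        (∀ i, ((if i = 0 then M * (p 0 : ℤ) else 0) - 2 - l i) - (a i : ℤ) = (p i : ℤ) * c i) ∧
        ∑ i, c i = 0) ↔
      ((Finset.univ.filter (fun i => l i = (p i : ℤ) - 1)).card : ℤ) ≤ M - t := by
  set m : ℤ := ((Finset.univ.filter (fun i => l i = (p i : ℤ) - 1)).card : ℤ) with hm
  have hsum_ite : ∀ (A B : ℤ), ∑ i : Fin t, (if i = 0 then A else B) = A + ((t : ℤ) - 1) * B := by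
    intro A B
    have : ∀ i : Fin t, (if i = 0 then A else B) = (if i = 0 then A - B else 0) + B := by
      intro i; split <;> ring
    rw [Finset.sum_congr rfl fun i _ => this i, Finset.sum_add_distrib, Finset.sum_ite_eq',
      Finset.sum_const]
    simp [Finset.card_univ]
    ring
  have hsum_d : ∑ i : Fin t, (if l i = (p i : ℤ) - 1 then (1:ℤ) else 0) = m := by
    rw [hm]; simp [Finset.sum_boole]
  constructor
  · rintro ⟨a, c, hc1, hc2⟩
    have hbound : ∀ i, c i ≤ (if i = 0 then M - 1 else -1) - (if l i = (p i : ℤ) - 1 then 1 else 0) := by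
      intro i
      have h1 := hc1 i
      have hpi : (2:ℤ) ≤ (p i : ℤ) := by exact_mod_cast hp i
      have hai : (0:ℤ) ≤ (a i : ℤ) := Int.natCast_nonneg _
      have hli := hl i
      by_cases h0 : i = 0
      · subst h0
        rw [if_pos rfl] at h1 ⊢
        by_cases hmax : l 0 = (p 0 : ℤ) - 1
        · rw [if_pos hmax]
          by_contra hcon; push_neg at hcon
          have hcon' : M - 1 ≤ c 0 := by omega
          nlinarith [mul_le_mul_of_nonneg_left hcon' (by linarith : (0:ℤ) ≤ (p 0 : ℤ))]
        · rw [if_neg hmax]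
          by_contra hcon; push_neg at hcon
          have hcon' : M ≤ c 0 := by omega
          nlinarith [mul_le_mul_of_nonneg_left hcon' (by linarith : (0:ℤ) ≤ (p 0 : ℤ))]
      · rw [if_neg h0] at h1 ⊢
        by_cases hmax : l i = (p i : ℤ) - 1
        · rw [if_pos hmax]
          by_contra hcon; push_neg at hcon
          have hcon' : -1 ≤ c i := by omega
          nlinarith [mul_le_mul_of_nonneg_left hcon' (by linarith : (0:ℤ) ≤ (p i : ℤ))]
        · rw [if_neg hmax]
          by_contra hcon; push_neg at hcon
          have hcon' : 0 ≤ c i := by omega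
          nlinarith [mul_le_mul_of_nonneg_left hcon' (by linarith : (0:ℤ) ≤ (p i : ℤ))]
    have hsle := Finset.sum_le_sum (fun i (_ : i ∈ Finset.univ) => hbound i)
    rw [hc2, Finset.sum_sub_distrib, hsum_ite (M-1) (-1), hsum_d] at hsle
    linarith
  · intro hMm
    set d : Fin t → ℤ := fun i => if l i = (p i : ℤ) - 1 then 1 else 0 with hd
    set c : Fin t → ℤ := fun i => (if i = 0 then (t : ℤ) - 1 + m else -1) - d i with hc
    have hnonneg : ∀ i, 0 ≤ ((if i = 0 then M * (p 0 : ℤ) else 0) - 2 - l i) - (p i : ℤ) * c i := by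
      intro i
      have hpi : (2:ℤ) ≤ (p i : ℤ) := by exact_mod_cast hp i
      have hli := hl i
      simp only [hc, hd]
      by_cases h0 : i = 0
      · subst h0
        rw [if_pos rfl, if_pos rfl]
        by_cases hmax : l 0 = (p 0 : ℤ) - 1
        · rw [if_pos hmax]
          have : (p 0 : ℤ) * ((t:ℤ) - 1 + m - 1) ≤ (p 0 : ℤ) * (M - 2) :=
            mul_le_mul_of_nonneg_left (by linarith) (by linarith)
          nlinarith
        · rw [if_neg hmax]
          have hl2 : l 0 ≤ (p 0 : ℤ) - 2 := by omega
          have : (p 0 : ℤ) * ((t:ℤ) - 1 + m - 0) ≤ (p 0 : ℤ) * (M - 1) :=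
            mul_le_mul_of_nonneg_left (by linarith) (by linarith)
          nlinarith
      · rw [if_neg h0, if_neg h0]
        by_cases hmax : l i = (p i : ℤ) - 1
        · rw [if_pos hmax]; nlinarith
        · rw [if_neg hmax]
          have hl2 : l i ≤ (p i : ℤ) - 2 := by omega
          nlinarith
    refine ⟨fun i => (((if i = 0 then M * (p 0 : ℤ) else 0) - 2 - l i) - (p i : ℤ) * c i).toNat, c,
      fun i => ?_, ?_⟩
    · rw [Int.toNat_of_nonneg (hnonneg i)]; ring
    · rw [hc, Finset.sum_sub_distrib, hsum_ite ((t:ℤ) - 1 + m) (-1), hd, hsum_d]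
      ring

end WPL

open WPL in
/-- for `x⃗ = ∑ lᵢ x⃗ᵢ` with `0 ≤ lᵢ ≤ pᵢ-1`, one has
`x⃗ ≤ δ⃗` and `2w⃗ - x⃗ ≱ 0` simultaneously iff exactly `t-3` indices
satisfy `lᵢ = pᵢ - 1`. -/
theorem le_delta_and_not_pos_iff_card
    (t : ℕ) [NeZero t] (ht : 3 ≤ t) (p : Fin t → ℕ) (hp : ∀ i, 2 ≤ p i)
    (l : Fin t → ℤ) (hl : ∀ i, 0 ≤ l i ∧ l i ≤ (p i : ℤ) - 1)
    (xv : L t p) (hxv : xv = ∑ i, l i • xg t p i) :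
    (pos t p (dg t p - xv) ∧ ¬ pos t p (2 • wg t p - xv)) ↔
      (Finset.univ.filter (fun i => l i = (p i : ℤ) - 1)).card = t - 3 := by
  have hm := WPL.key_lemma t p hp l hl
  have h1 : pos t p (dg t p - xv) ↔
      ((Finset.univ.filter (fun i => l i = (p i : ℤ) - 1)).card : ℤ) ≤ (2 * (t:ℤ) - 3) - t := by
    rw [hxv, dg_sub, pos_mk_iff]
    exact hm (2 * (t:ℤ) - 3)
  have h2 : pos t p (2 • wg t p - xv) ↔
      ((Finset.univ.filter (fun i => l i = (p i : ℤ) - 1)).card : ℤ) ≤ (2 * (t:ℤ) - 4) - t := by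
    rw [hxv, wg2_sub, pos_mk_iff]
    exact hm (2 * (t:ℤ) - 4)
  rw [h1, h2]
  omega
end

section
/- Let x⃗ = Σ_{i=1}^t l_i·x⃗_i with integers 0 ≤ l_i ≤ p_i − 1. If x⃗ ≤ δ⃗, then at least 3 indices i ∈ {1,…,t} satisfy l_i ≤ p_i − 2. -/
open scoped BigOperators

section Aux
open WPL
variable (t : ℕ) [NeZero t] (p : Fin t → ℕ)

noncomputable def phiAux : (Fin t → ℤ) →ₗ[ℤ] ℚ where
  toFun v := ∑ i, (v i : ℚ) / (p i : ℚ)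
  map_add' u v := by
    simp [add_div, Finset.sum_add_distrib]
  map_smul' c v := by
    simp [Finset.mul_sum, mul_div_assoc]

def psiAux (j : Fin t) : (Fin t → ℤ) →ₗ[ℤ] ZMod (p j) :=
  (Int.castAddHom (ZMod (p j))).toIntLinearMap.comp (LinearMap.proj j)

lemma phiAux_ker (hp : ∀ i, 2 ≤ p i) : rel t p ≤ LinearMap.ker (phiAux t p) := by
  rw [rel, Submodule.span_le]
  rintro v ⟨i, rfl⟩
  have hne : ∀ j : Fin t, ((p j : ℚ)) ≠ 0 := fun j => by
    have := hp j; positivity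
  simp only [SetLike.mem_coe, LinearMap.mem_ker, phiAux, LinearMap.coe_mk, AddHom.coe_mk]
  simp only [Pi.sub_apply, Pi.smul_apply, Pi.single_apply, smul_eq_mul, mul_ite, mul_one, mul_zero]
  push_cast
  simp only [sub_div, Finset.sum_sub_distrib, ite_div, zero_div]
  rw [Finset.sum_ite_eq' Finset.univ (0 : Fin t) (fun j => (p 0 : ℚ) / (p j : ℚ))]
  rw [Finset.sum_ite_eq' Finset.univ i (fun j => (p i : ℚ) / (p j : ℚ))]
  simp [div_self (hne 0), div_self (hne i)]

lemma psiAux_ker (j : Fin t) : rel t p ≤ LinearMap.ker (psiAux t p j) := by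
  rw [rel, Submodule.span_le]
  rintro v ⟨i, rfl⟩
  simp only [SetLike.mem_coe, LinearMap.mem_ker, psiAux, LinearMap.comp_apply,
    LinearMap.proj_apply, AddMonoidHom.coe_toIntLinearMap, Int.coe_castAddHom,
    Pi.sub_apply, Pi.smul_apply, Pi.single_apply, smul_eq_mul, mul_ite, mul_one, mul_zero]
  push_cast
  by_cases h1 : j = 0
  · subst h1
    by_cases h2 : (0 : Fin t) = i
    · subst h2; simp
    · simp [h2, ZMod.natCast_self]
  · by_cases h2 : j = i
    · subst h2; simp [h1, ZMod.natCast_self]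
    · simp [h1, h2]

noncomputable def PhiQ (hp : ∀ i, 2 ≤ p i) : L t p →ₗ[ℤ] ℚ :=
  Submodule.liftQ (rel t p) (phiAux t p) (phiAux_ker t p hp)

def PsiZ (j : Fin t) : L t p →ₗ[ℤ] ZMod (p j) :=
  Submodule.liftQ (rel t p) (psiAux t p j) (psiAux_ker t p j)

lemma PhiQ_xg (hp : ∀ i, 2 ≤ p i) (i : Fin t) :
    PhiQ t p hp (xg t p i) = 1 / (p i : ℚ) := by
  simp only [PhiQ, xg, Submodule.liftQ_apply, phiAux, LinearMap.coe_mk, AddHom.coe_mk]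
  simp [Pi.single_apply, ite_div, zero_div, Finset.sum_ite_eq' Finset.univ i]

lemma PsiZ_xg (j i : Fin t) :
    PsiZ t p j (xg t p i) = if j = i then 1 else 0 := by
  simp only [PsiZ, xg, Submodule.liftQ_apply, psiAux, LinearMap.comp_apply,
    LinearMap.proj_apply, AddMonoidHom.coe_toIntLinearMap, Int.coe_castAddHom]
  simp [Pi.single_apply]


end Aux

open WPL in
/-- if `x⃗ = ∑ lᵢ x⃗ᵢ` with `0 ≤ lᵢ ≤ pᵢ-1` satisfies `x⃗ ≤ δ⃗`,
then at least 3 indices satisfy `lᵢ ≤ pᵢ - 2`. -/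
theorem three_small_coefficients
    (t : ℕ) [NeZero t] (ht : 3 ≤ t) (p : Fin t → ℕ) (hp : ∀ i, 2 ≤ p i)
    (l : Fin t → ℤ) (hl : ∀ i, 0 ≤ l i ∧ l i ≤ (p i : ℤ) - 1)
    (xv : L t p) (hxv : xv = ∑ i, l i • xg t p i)
    (hxd : pos t p (dg t p - xv)) :
    3 ≤ (Finset.univ.filter (fun i => l i ≤ (p i : ℤ) - 2)).card := by
  obtain ⟨a, ha⟩ := hxd
  set b : Fin t → ℤ := fun i => l i + (a i : ℤ) + 2 with hb
  have h1 : dg t p = ∑ i, (l i + (a i : ℤ)) • xg t p i := by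
    have h0 : dg t p = xv + (dg t p - xv) := by abel
    rw [h0, ha, hxv, ← Finset.sum_add_distrib]
    simp [add_smul]
  have h2 : dg t p = (2 * (t : ℤ) - 3) • cg t p - (2:ℤ) • ∑ i, xg t p i := by
    simp only [dg, wg]
    module
  have key : ∑ i, b i • xg t p i = (2 * (t : ℤ) - 3) • cg t p := by
    have hstep : ∑ i, b i • xg t p i
        = (∑ i, (l i + (a i : ℤ)) • xg t p i) + (2:ℤ) • ∑ i, xg t p i := by
      rw [Finset.smul_sum, ← Finset.sum_add_distrib]
      refine Finset.sum_congr rfl fun i _ => ?_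
      rw [hb]
      simp only
      rw [add_smul, add_smul]
    rw [hstep, ← h1, h2]
    abel
  have hdvd : ∀ j, (p j : ℤ) ∣ b j := by
    intro j
    haveI : NeZero (p j) := ⟨by have := hp j; omega⟩
    have hKey := congrArg (PsiZ t p j) key
    simp only [map_sum, map_smul, PsiZ_xg] at hKey
    have hc : ((2 * (t : ℤ) - 3) • PsiZ t p j (cg t p)) = 0 := by
      simp only [cg, map_smul, PsiZ_xg]
      by_cases hj : j = (0 : Fin t)
      · subst hj
        simp only [if_pos rfl, zsmul_eq_mul, mul_one]
        push_cast
        simp [ZMod.natCast_self]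
      · simp [hj]
    rw [hc] at hKey
    simp only [smul_ite, smul_zero, Finset.sum_ite_eq, Finset.mem_univ, if_true] at hKey
    have hz : ((b j : ℤ) : ZMod (p j)) = 0 := by
      rw [← hKey]; simp [zsmul_eq_mul]
    exact (ZMod.intCast_zmod_eq_zero_iff_dvd _ _).mp hz
  have hbpos : ∀ i, 0 < b i := fun i => by
    have := (hl i).1
    have h0a := Int.ofNat_nonneg (a i)
    simp only [hb]; omega
  have hbge : ∀ i, (p i : ℤ) ≤ b i := fun i => Int.le_of_dvd (hbpos i) (hdvd i)
  have hKey2 := congrArg (PhiQ t p hp) key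
  simp only [map_sum, map_smul, PhiQ_xg, cg] at hKey2
  have hp0 : ((p 0 : ℚ)) ≠ 0 := by have := hp 0; positivity
  have hsum : ∑ i, (b i : ℚ) / (p i : ℚ) = 2 * (t : ℚ) - 3 := by
    rw [show ∑ i, (b i : ℚ) / (p i : ℚ) = ∑ i, b i • (1 / (p i : ℚ)) by
      refine Finset.sum_congr rfl fun i _ => ?_
      rw [zsmul_eq_mul]; ring]
    rw [hKey2, zsmul_eq_mul, zsmul_eq_mul]
    push_cast
    field_simp
  have hterm : ∀ i, (if l i ≤ (p i : ℤ) - 2 then (1:ℚ) else 2) ≤ (b i : ℚ) / (p i : ℚ) := by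
    intro i
    have hpi : (0:ℚ) < (p i : ℚ) := by have := hp i; positivity
    have hpi' : (0:ℤ) < (p i : ℤ) := by have := hp i; omega
    split_ifs with h
    · rw [le_div_iff₀ hpi]
      have hc1 : ((p i : ℤ) : ℚ) ≤ ((b i : ℤ) : ℚ) := by exact_mod_cast hbge i
      push_cast at hc1 ⊢
      linarith
    · obtain ⟨k, hk⟩ := hdvd i
      have hbig : (p i : ℤ) < b i := by
        have := (hl i).2
        have h0a := Int.ofNat_nonneg (a i)
        simp only [hb]; omega
      have hk2 : 2 ≤ k := by
        rcases lt_or_ge k 2 with hlt | hle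
        · exfalso
          have hk1 : k ≤ 1 := by omega
          have hmul : (p i : ℤ) * k ≤ (p i : ℤ) * 1 :=
            mul_le_mul_of_nonneg_left hk1 hpi'.le
          rw [← hk, mul_one] at hmul
          omega
        · exact hle
      have h2p : 2 * (p i : ℤ) ≤ b i := by
        rw [hk]
        have := mul_le_mul_of_nonneg_left hk2 hpi'.le
        linarith
      rw [le_div_iff₀ hpi]
      have hc2 : ((2 * (p i : ℤ) : ℤ) : ℚ) ≤ ((b i : ℤ) : ℚ) := by exact_mod_cast h2p
      push_cast at hc2 ⊢
      linarith
  have hsum2 : ∑ i, (if l i ≤ (p i : ℤ) - 2 then (1:ℚ) else 2) ≤ 2 * (t : ℚ) - 3 := by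
    rw [← hsum]; exact Finset.sum_le_sum fun i _ => hterm i
  rw [Finset.sum_ite, Finset.sum_const, Finset.sum_const] at hsum2
  have hcard : (Finset.univ.filter (fun i => l i ≤ (p i : ℤ) - 2)).card
      + (Finset.univ.filter (fun i => ¬ l i ≤ (p i : ℤ) - 2)).card = t := by
    rw [Finset.card_filter_add_card_filter_not]
    simp
  have hcQ : ((Finset.univ.filter (fun i => l i ≤ (p i : ℤ) - 2)).card : ℚ)
      + ((Finset.univ.filter (fun i => ¬ l i ≤ (p i : ℤ) - 2)).card : ℚ) = t := by
    exact_mod_cast hcard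
  simp only [nsmul_eq_mul, mul_one] at hsum2
  have hfin : (3:ℚ) ≤ ((Finset.univ.filter (fun i => l i ≤ (p i : ℤ) - 2)).card : ℚ) := by
    linarith
  exact_mod_cast hfin
end

section
/- Let y⃗ ∈ L, let I ⊆ {1,…,t} with #I = 3, and let x⃗ = Σ_{i∈I} l_i·x⃗_i + Σ_{j∉I} (p_j−1)·x⃗_j with integers 0 ≤ l_i ≤ p_i − 2 for i ∈ I. If y⃗ + w⃗ ≥ 0 and y⃗ + x⃗ ≥ 0, then either y⃗ + x⃗ − c⃗ ≥ 0, or there exists an index i ∈ I such that y⃗ + w⃗ + (1 + l_i)·x⃗_i − c⃗ ≥ 0. -/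
open scoped BigOperators

namespace WPL

set_option linter.unusedSectionVars false

variable (t : ℕ) [NeZero t] (p : Fin t → ℕ)

lemma mk_sum (f : Fin t → ℤ) :
    (∑ i, f i • xg t p i) = (Submodule.Quotient.mk f : L t p) := by
  have h : ∀ i : Fin t, xg t p i = (rel t p).mkQ (Pi.single i 1) := fun i => rfl
  simp_rw [h, ← map_smul, ← map_sum]
  have : (∑ i : Fin t, f i • Pi.single i (1:ℤ)) = f := by
    funext k
    simp [Pi.single_apply]
  rw [this]
  rfl

lemma gen_mem (j : Fin t) :
    (p 0 : ℤ) • Pi.single (0 : Fin t) (1 : ℤ) - (p j : ℤ) • Pi.single j (1 : ℤ) ∈ rel t p :=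
  Submodule.subset_span ⟨j, rfl⟩

lemma cg_eq_zero :
    cg t p = (Submodule.Quotient.mk ((p 0 : ℤ) • Pi.single (0 : Fin t) (1 : ℤ)) : L t p) := by
  rw [cg, xg, ← Submodule.Quotient.mk_smul]

lemma cg_eq (j : Fin t) :
    cg t p = (Submodule.Quotient.mk ((p j : ℤ) • Pi.single j (1 : ℤ)) : L t p) := by
  rw [cg_eq_zero, Submodule.Quotient.eq]
  exact gen_mem t p j

lemma mk_sum_indicator (I : Finset (Fin t)) (g : Fin t → ℤ) :
    ∑ i ∈ I, g i • xg t p i =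
      (Submodule.Quotient.mk (fun k => if k ∈ I then g k else 0) : L t p) := by
  rw [← mk_sum]
  have := Finset.sum_ite_mem Finset.univ I (fun i => g i • xg t p i)
  rw [Finset.univ_inter] at this
  rw [← this]
  apply Finset.sum_congr rfl
  intro i _
  split <;> simp

lemma pos_of_mk (z : L t p) (f : Fin t → ℤ)
    (hz : z = (Submodule.Quotient.mk f : L t p)) (hf : ∀ k, 0 ≤ f k) : pos t p z := by
  refine ⟨fun k => (f k).toNat, ?_⟩
  rw [hz, mk_sum]
  congr 1
  funext k
  simp [Int.toNat_of_nonneg (hf k)]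

noncomputable def P : ℤ := ∏ i : Fin t, (p i : ℤ)

lemma p_dvd_P (i : Fin t) : (p i : ℤ) ∣ P t p :=
  Finset.dvd_prod_of_mem _ (Finset.mem_univ i)

noncomputable def degL : (Fin t → ℤ) →ₗ[ℤ] ℤ :=
  ∑ i : Fin t, (P t p / (p i : ℤ)) • LinearMap.proj i

lemma degL_apply (f : Fin t → ℤ) : degL t p f = ∑ i : Fin t, (P t p / (p i : ℤ)) * f i := by
  simp [degL, LinearMap.sum_apply, LinearMap.smul_apply]

lemma degL_ker : rel t p ≤ LinearMap.ker (degL t p) := by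
  rw [rel, Submodule.span_le]
  rintro v ⟨i, rfl⟩
  have h0 : (p 0 : ℤ) * (P t p / (p 0 : ℤ)) = P t p := Int.mul_ediv_cancel' (p_dvd_P t p 0)
  have hi : (p i : ℤ) * (P t p / (p i : ℤ)) = P t p := Int.mul_ediv_cancel' (p_dvd_P t p i)
  simp only [SetLike.mem_coe, LinearMap.mem_ker, map_sub, map_smul, smul_eq_mul]
  rw [degL_apply, degL_apply]
  simp only [Pi.single_apply]
  rw [Finset.sum_congr rfl (fun j _ => by rw [mul_ite, mul_one, mul_zero]),
      Finset.sum_ite_eq' Finset.univ (0 : Fin t) (fun j => P t p / (p j : ℤ)),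
      Finset.sum_congr rfl (fun j _ => by rw [mul_ite, mul_one, mul_zero]),
      Finset.sum_ite_eq' Finset.univ i (fun j => P t p / (p j : ℤ))]
  simp only [Finset.mem_univ, if_true]
  rw [mul_comm ((p 0 : ℤ)), mul_comm ((p i : ℤ))] at *
  omega

noncomputable def degQ : L t p →ₗ[ℤ] ℤ := Submodule.liftQ _ (degL t p) (degL_ker t p)

lemma degQ_mk (f : Fin t → ℤ) :
    degQ t p (Submodule.Quotient.mk f) = ∑ i : Fin t, (P t p / (p i : ℤ)) * f i := by
  rw [degQ, Submodule.liftQ_apply, degL_apply]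

noncomputable def resL (i : Fin t) : (Fin t → ℤ) →ₗ[ℤ] ZMod (p i) :=
  (Algebra.linearMap ℤ (ZMod (p i))).comp (LinearMap.proj i)

lemma resL_apply (i : Fin t) (f : Fin t → ℤ) : resL t p i f = (f i : ZMod (p i)) := by
  simp [resL, Algebra.linearMap, algebraMap_int_eq]

lemma resL_ker (i : Fin t) : rel t p ≤ LinearMap.ker (resL t p i) := by
  rw [rel, Submodule.span_le]
  rintro v ⟨j, rfl⟩
  simp only [SetLike.mem_coe, LinearMap.mem_ker, map_sub, map_smul, smul_eq_mul]
  rw [resL_apply, resL_apply]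
  simp only [Pi.single_apply, Pi.smul_apply, smul_eq_mul]
  by_cases h0 : i = (0 : Fin t) <;> by_cases hj : i = j <;>
    simp only [h0, hj, if_true, if_pos, mul_one, mul_zero] <;>
    (subst_vars; push_cast; simp [ZMod.natCast_self])
  all_goals (intro h; simp_all)

noncomputable def resQ (i : Fin t) : L t p →ₗ[ℤ] ZMod (p i) :=
  Submodule.liftQ _ (resL t p i) (resL_ker t p i)

lemma resQ_mk (i : Fin t) (f : Fin t → ℤ) :
    resQ t p i (Submodule.Quotient.mk f) = (f i : ZMod (p i)) := by
  rw [resQ, Submodule.liftQ_apply, resL_apply]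

lemma keyA (hp : ∀ i, 2 ≤ p i) (u v : Fin t → ℤ) (m n : ℤ)
    (hu : ∀ k, 0 ≤ u k ∧ u k < (p k : ℤ)) (hv : ∀ k, 0 ≤ v k ∧ v k < (p k : ℤ))
    (h : (Submodule.Quotient.mk (fun k => u k + m * (p 0 : ℤ) * (if k = 0 then 1 else 0)) : L t p)
       = (Submodule.Quotient.mk (fun k => v k + n * (p 0 : ℤ) * (if k = 0 then 1 else 0)) : L t p)) :
    m = n := by
  have huv : u = v := by
    funext i
    have hr := congrArg (resQ t p i) h
    rw [resQ_mk, resQ_mk] at hr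
    have hr' : ((u i : ℤ) : ZMod (p i)) = ((v i : ℤ) : ZMod (p i)) := by
      by_cases h0 : i = (0 : Fin t)
      · subst h0; simp only [if_true] at hr
        push_cast at hr
        simp [ZMod.natCast_self] at hr
        convert hr using 2 <;> push_cast <;> ring_nf <;> simp [ZMod.natCast_self]
      · simp [h0] at hr; exact_mod_cast hr
    rw [ZMod.intCast_eq_intCast_iff] at hr'
    have hdvd : (p i : ℤ) ∣ v i - u i := hr'.dvd
    have := Int.eq_zero_of_abs_lt_dvd hdvd (by
      have h1 := hu i; have h2 := hv i
      rw [abs_lt]; omega)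
    omega
  subst huv
  have hd := congrArg (degQ t p) h
  rw [degQ_mk, degQ_mk] at hd
  have hsplit : ∀ c : ℤ, (∑ i : Fin t, (P t p / (p i : ℤ)) * (u i + c * (p 0 : ℤ) * (if i = 0 then 1 else 0)))
      = (∑ i : Fin t, (P t p / (p i : ℤ)) * u i) + c * ((p 0 : ℤ) * (P t p / (p 0 : ℤ))) := by
    intro c
    rw [Finset.sum_congr rfl (fun i _ => by ring_nf :
      ∀ i ∈ Finset.univ, (P t p / (p i : ℤ)) * (u i + c * (p 0 : ℤ) * (if i = 0 then 1 else 0))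
        = (P t p / (p i : ℤ)) * u i + (c * (p 0 : ℤ) * (P t p / (p i : ℤ))) * (if i = 0 then 1 else 0))]
    rw [Finset.sum_add_distrib]
    congr 1
    have h2 : ∀ i ∈ Finset.univ, (c * (p 0 : ℤ) * (P t p / (p i : ℤ))) * (if i = 0 then 1 else 0)
        = if i = (0 : Fin t) then c * ((p 0 : ℤ) * (P t p / (p 0 : ℤ))) else 0 := by
      intro i _
      split_ifs with hh
      · subst hh; ring
      · exact mul_zero _
    rw [Finset.sum_congr rfl h2, Finset.sum_ite_eq' Finset.univ (0 : Fin t)]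
    simp
  rw [hsplit, hsplit] at hd
  have hK : (p 0 : ℤ) * (P t p / (p 0 : ℤ)) = P t p := Int.mul_ediv_cancel' (p_dvd_P t p 0)
  have hPpos : 0 < P t p := Finset.prod_pos (fun i _ => by exact_mod_cast Nat.lt_of_lt_of_le Nat.zero_lt_two (hp i))
  rw [hK] at hd
  have : m * P t p = n * P t p := by omega
  exact mul_right_cancel₀ (ne_of_gt hPpos) this

/-- the key identity `w + ∑_{i∈I}(1+l_i) x_i = x + c`. -/
lemma id1 (ht : 3 ≤ t) (I : Finset (Fin t)) (hI : I.card = 3) (l : Fin t → ℤ) :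
    wg t p + ∑ i ∈ I, (1 + l i) • xg t p i
      = (∑ i ∈ I, l i • xg t p i + ∑ j ∈ Iᶜ, ((p j : ℤ) - 1) • xg t p j) + cg t p := by
  have hones : (∑ i : Fin t, xg t p i) = (Submodule.Quotient.mk (fun _ => (1:ℤ)) : L t p) := by
    rw [← mk_sum]
    exact Finset.sum_congr rfl (fun i _ => (one_smul ℤ _).symm)
  rw [wg, cg_eq_zero, hones, mk_sum_indicator, mk_sum_indicator, mk_sum_indicator,
    ← Submodule.Quotient.mk_smul, ← Submodule.Quotient.mk_sub, ← Submodule.Quotient.mk_add,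
    ← Submodule.Quotient.mk_add, ← Submodule.Quotient.mk_add, Submodule.Quotient.eq]
  have hcard : (Iᶜ.card : ℤ) = (t : ℤ) - 3 := by
    have : Iᶜ.card = t - 3 := by
      rw [Finset.card_compl, hI]
      simp
    rw [this]; omega
  have hD : (((t : ℤ) - 2) • ((p 0 : ℤ) • Pi.single (0 : Fin t) (1:ℤ)) - (fun _ => (1:ℤ))
        + (fun k => if k ∈ I then 1 + l k else 0)
      - ((fun k => if k ∈ I then l k else 0) + (fun k => if k ∈ Iᶜ then (p k : ℤ) - 1 else 0)
        + (p 0 : ℤ) • Pi.single (0 : Fin t) (1:ℤ)))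
      = ∑ j ∈ Iᶜ, ((p 0 : ℤ) • Pi.single (0 : Fin t) (1:ℤ) - (p j : ℤ) • Pi.single j (1:ℤ)) := by
    funext k
    simp only [Pi.add_apply, Pi.sub_apply, Pi.smul_apply, smul_eq_mul, Finset.sum_apply,
      Pi.single_apply, Finset.sum_sub_distrib, Finset.mem_compl,
      mul_ite, mul_one, mul_zero]
    rw [Finset.sum_const, Finset.sum_ite_eq Iᶜ k (fun j => (p j : ℤ))]
    simp only [nsmul_eq_mul, smul_eq_mul, Finset.mem_compl, hcard]
    split_ifs <;> first
      | ring
      | (exfalso; tauto)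
  rw [hD]
  exact Submodule.sum_mem _ (fun j _ => gen_mem t p j)

lemma right_case (a : Fin t → ℕ) (i j : Fin t) (li : ℤ) (hli : 0 ≤ li) (z : L t p)
    (hz : z = (Submodule.Quotient.mk (fun k => (a k : ℤ)) : L t p))
    (hge : (p j : ℤ) ≤ (a j : ℤ) + (if j = i then 1 + li else 0)) :
    pos t p (z + (1 + li) • xg t p i - cg t p) := by
  apply pos_of_mk t p _
    (fun k => (a k : ℤ) + (if k = i then 1 + li else 0) - (if k = j then (p j : ℤ) else 0))
  · rw [hz, cg_eq t p j, xg, ← Submodule.Quotient.mk_smul, ← Submodule.Quotient.mk_add,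
      ← Submodule.Quotient.mk_sub]
    congr 1
    funext k
    simp only [Pi.add_apply, Pi.sub_apply, Pi.smul_apply, smul_eq_mul, Pi.single_apply,
      mul_ite, mul_one, mul_zero]
  · intro k
    rcases eq_or_ne k j with rfl | hkj
    · rcases eq_or_ne k i with rfl | hki
      · rw [if_pos rfl, if_pos rfl]; rw [if_pos rfl] at hge; omega
      · rw [if_neg hki, if_pos rfl]; rw [if_neg hki] at hge; omega
    · rw [if_neg hkj]
      rcases eq_or_ne k i with rfl | hki
      · rw [if_pos rfl]; omega
      · rw [if_neg hki]; omega

end WPL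

open WPL in
/-- if `y⃗ + w⃗ ≥ 0` and `y⃗ + x⃗ ≥ 0`, then either
`y⃗ + x⃗ - c⃗ ≥ 0` or `y⃗ + w⃗ + (1+lᵢ) x⃗ᵢ - c⃗ ≥ 0` for some `i ∈ I`. -/
theorem exists_summand_of_injective_hull
    (t : ℕ) [NeZero t] (ht : 3 ≤ t) (p : Fin t → ℕ) (hp : ∀ i, 2 ≤ p i)
    (y : L t p)
    (I : Finset (Fin t)) (hI : I.card = 3)
    (l : Fin t → ℤ) (hl : ∀ i ∈ I, 0 ≤ l i ∧ l i ≤ (p i : ℤ) - 2)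
    (xv : L t p)
    (hxv : xv = ∑ i ∈ I, l i • xg t p i + ∑ j ∈ Iᶜ, ((p j : ℤ) - 1) • xg t p j)
    (h1 : pos t p (y + wg t p)) (h2 : pos t p (y + xv)) :
    pos t p (y + xv - cg t p) ∨
      ∃ i ∈ I, pos t p (y + wg t p + (1 + l i) • xg t p i - cg t p) := by

  obtain ⟨a, ha⟩ := h1
  obtain ⟨b, hb⟩ := h2
  rw [mk_sum] at ha hb
  by_cases hbig : ∃ j, (p j : ℤ) ≤ (b j : ℤ)
  · left
    obtain ⟨j, hj⟩ := hbig
    apply pos_of_mk t p _ (fun k => (b k : ℤ) - (if k = j then (p j : ℤ) else 0))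
    · rw [hb, cg_eq t p j, ← Submodule.Quotient.mk_sub]
      congr 1
      funext k
      simp only [Pi.sub_apply, Pi.smul_apply, smul_eq_mul, Pi.single_apply,
        mul_ite, mul_one, mul_zero]
    · intro k
      by_cases hkj : k = j <;> simp [hkj] <;> omega
  · push_neg at hbig
    have hInonempty : I.Nonempty := Finset.card_pos.mp (by omega)
    by_cases habig : ∃ j, (p j : ℤ) ≤ (a j : ℤ)
    · right
      obtain ⟨j, hj⟩ := habig
      obtain ⟨i, hi⟩ := hInonempty
      exact ⟨i, hi, right_case t p a i j (l i) (hl i hi).1 _ ha (by have := (hl i hi).1; split <;> omega)⟩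
    · push_neg at habig
      by_cases hIa : ∃ i ∈ I, (p i : ℤ) ≤ (a i : ℤ) + 1 + l i
      · right
        obtain ⟨i, hi, hgei⟩ := hIa
        exact ⟨i, hi, right_case t p a i i (l i) (hl i hi).1 _ ha (by simp; omega)⟩
      · exfalso
        push_neg at hIa
        -- derive star equation
        have star : (Submodule.Quotient.mk
            (fun k => ((a k : ℤ) + (if k ∈ I then 1 + l k else 0)) + 0 * (p 0 : ℤ) * (if k = 0 then 1 else 0)) : L t p)
          = (Submodule.Quotient.mk
            (fun k => (b k : ℤ) + 1 * (p 0 : ℤ) * (if k = 0 then 1 else 0)) : L t p) := by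
          have e1 : (Submodule.Quotient.mk
              (fun k => ((a k : ℤ) + (if k ∈ I then 1 + l k else 0)) + 0 * (p 0 : ℤ) * (if k = 0 then 1 else 0)) : L t p)
            = (y + wg t p) + ∑ i ∈ I, (1 + l i) • xg t p i := by
            rw [ha, mk_sum_indicator, ← Submodule.Quotient.mk_add]
            congr 1
            funext k
            simp only [Pi.add_apply]
            ring
          have e2 : (Submodule.Quotient.mk
              (fun k => (b k : ℤ) + 1 * (p 0 : ℤ) * (if k = 0 then 1 else 0)) : L t p)
            = (y + xv) + cg t p := by
            rw [hb, cg_eq_zero, ← Submodule.Quotient.mk_add]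
            congr 1
            funext k
            simp only [Pi.add_apply, Pi.smul_apply, smul_eq_mul, Pi.single_apply,
              mul_ite, mul_one, mul_zero]
            ring_nf
          rw [e1, e2, add_assoc, add_assoc]
          congr 1
          rw [hxv]
          exact id1 t p ht I hI l
        have := keyA t p hp
          (fun k => (a k : ℤ) + (if k ∈ I then 1 + l k else 0))
          (fun k => (b k : ℤ)) 0 1
          (fun k => by
            constructor
            · by_cases hk : k ∈ I
              · have := (hl k hk).1; simp [hk]; omega
              · simp [hk]
            · by_cases hk : k ∈ I
              · have h3 := hIa k hk; simp [hk]; omega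
              · have := habig k; simp [hk]; omega)
          (fun k => ⟨by positivity, hbig k⟩)
          star
        omega
end

section
/- Let k be a field and λ_3,…,λ_t ∈ k pairwise distinct nonzero scalars. Give the polynomial ring k[X_1,…,X_t] the L-grading in which the monomial X_1^{m_1}⋯X_t^{m_t} has degree m_1·x⃗_1 + ⋯ + m_t·x⃗_t ∈ L, and let S = k[X_1,…,X_t]/⟨X_i^{p_i} − X_1^{p_1} − λ_i·X_2^{p_2} : i = 3,…,t⟩ (the defining polynomials are homogeneous of degree c⃗). For y⃗ ∈ L with normal form y⃗ = l·c⃗ + Σ_{i=1}^t l_i·x⃗_i (l ∈ ℤ, 0 ≤ l_i ≤ p_i−1), the k-subspace of S spanned by the residue classes of all monomials of degree y⃗ has dimension l + 1 if l ≥ 0, and is the zero subspace if l < 0. -/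
open scoped BigOperators

/-!
The degree `x⃗ᵢ ↦ 1/pᵢ` into `ℚ` and the residues `L → ℤ/pᵢ` show that the monomials of degree
`l c⃗ + ∑ lᵢ x⃗ᵢ` are exactly `X^{l⃗} ∏ (Xᵢ^{pᵢ})^{bᵢ}` with `∑ bᵢ = l` (no monomial if `l < 0`).
In `S` every `Xᵢ^{pᵢ}` is a linear combination of `u = X₁^{p₁}` and `v = X₂^{p₂}`, so these classes
span the same space as the `l + 1` elements `X^{l⃗} u^a v^{l-a}`. The latter are linearly
independent: at a `k̄`-point of `Spec S` with `u = A`, `v = 1` and no vanishing coordinate they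
take the values `w A^a` with `w ≠ 0`, and `A` ranges over all but finitely many elements of `k̄`,
so a Vandermonde determinant rules out any linear relation.
-/

open MvPolynomial Submodule

theorem Fin.two_le_val_iff {t : ℕ} [NeZero t] (i : Fin t) : 2 ≤ (i : ℕ) ↔ i ≠ 0 ∧ i ≠ 1 := by
  rw [Ne, Ne, Fin.ext_iff, Fin.ext_iff, Fin.val_zero, Fin.val_one']
  rcases Nat.lt_or_ge 1 t with ht | ht
  · rw [Nat.mod_eq_of_lt ht]
    omega
  · have := i.isLt
    omega

theorem Finset.prod_pow_add_mul {M ι : Type*} [CommMonoid M] [Fintype ι] (f : ι → M) (c q b : ι → ℕ) :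
    ∏ i, f i ^ (c i + q i * b i) = (∏ i, f i ^ c i) * ∏ i, (f i ^ q i) ^ b i := by
  simp [pow_add, pow_mul, Finset.prod_mul_distrib]

namespace Submodule

variable {k R : Type*} [CommSemiring k] [CommSemiring R] [Algebra k R]

theorem prod_pow_mem_pow_sum {ι : Type*} (s : Finset ι) {M : Submodule k R} {u : ι → R}
    (hu : ∀ i ∈ s, u i ∈ M) (b : ι → ℕ) : ∏ i ∈ s, u i ^ b i ∈ M ^ ∑ i ∈ s, b i := by
  classical
  induction s using Finset.cons_induction with
  | empty => simpa using one_le.mp (le_refl (1 : Submodule k R))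
  | cons i s hi ih =>
    rw [Finset.prod_cons, Finset.sum_cons, pow_add]
    exact mul_mem_mul (pow_mem_pow M (hu i (Finset.mem_cons_self i s)) _)
      (ih fun j hj => hu j (Finset.mem_cons_of_mem hj))

theorem span_pair_pow_le (α β : R) (n : ℕ) :
    span k {α, β} ^ n ≤ span k (Set.range fun a : Fin (n + 1) => α ^ (a : ℕ) * β ^ (n - a)) := by
  induction n with
  | zero => simp [one_eq_span]
  | succ n ih =>
    rw [pow_succ]
    refine (mul_le_mul_left ih _).trans ?_
    rw [span_mul_span]
    refine span_mono ?_
    rintro _ ⟨_, ⟨a, rfl⟩, _, hγ, rfl⟩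
    rcases hγ with rfl | rfl
    · refine ⟨a.succ, ?_⟩
      simp only [Fin.val_succ]
      rw [show n + 1 - (a + 1) = n - a by omega]
      ring
    · refine ⟨a.castSucc, ?_⟩
      simp only [Fin.val_castSucc]
      rw [show n + 1 - a = n - a + 1 by omega]
      ring

end Submodule

theorem linearIndependent_of_forall_mem_exists_eq_mul_pow {k K V : Type*} [Field k] [Field K]
    [Algebra k K] [AddCommGroup V] [Module k V] {n : ℕ} (g : Fin n → V) {s : Set K}
    (hs : s.Infinite) (hg : ∀ A ∈ s, ∃ φ : V →ₗ[k] K, ∃ w ≠ 0, ∀ a, φ (g a) = w * A ^ (a : ℕ)) :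
    LinearIndependent k g := by
  rw [Fintype.linearIndependent_iff]
  intro c hc
  let e := hs.natEmbedding
  choose φ w hw hφ using fun j : Fin n => hg (e j) (e j).2
  have hv : (fun a => algebraMap k K (c a)) = 0 := by
    refine Matrix.eq_zero_of_forall_index_sum_mul_pow_eq_zero (f := fun j => (e j : K))
      (fun i j h => Fin.val_injective (e.injective (Subtype.ext h))) fun j => ?_
    have := congrArg (φ j) hc
    simp only [map_sum, map_smul, hφ, map_zero, Algebra.smul_def] at this
    refine (mul_eq_zero.mp ?_).resolve_left (hw j)
    rw [Finset.mul_sum, ← this]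
    exact Finset.sum_congr rfl fun a _ => by ring
  intro a
  simpa using congrFun hv a

namespace WPL

section Grading

variable {t : ℕ} [NeZero t] {p : Fin t → ℕ}

theorem natCast_smul_xg (i : Fin t) : (p i : ℤ) • xg t p i = cg t p := by
  unfold cg xg
  rw [← Submodule.Quotient.mk_smul, ← Submodule.Quotient.mk_smul, Submodule.Quotient.eq, ← neg_sub]
  exact neg_mem (Submodule.subset_span ⟨i, rfl⟩)

noncomputable def degree (hp : ∀ i, p i ≠ 0) : L t p →ₗ[ℤ] ℚ :=
  (rel t p).liftQ
    { toFun := fun v => ∑ i, (v i : ℚ) / p i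
      map_add' := fun u v => by simp [add_div, Finset.sum_add_distrib]
      map_smul' := fun a v => by simp [Finset.mul_sum, mul_div_assoc] }
    (by
      rw [rel, Submodule.span_le]
      rintro _ ⟨i, rfl⟩
      simp [Pi.single_apply, sub_div, ite_div, hp])

theorem degree_xg (hp : ∀ i, p i ≠ 0) (i : Fin t) : degree hp (xg t p i) = (p i : ℚ)⁻¹ := by
  simp [degree, xg, Pi.single_apply, ite_div]

theorem degree_cg (hp : ∀ i, p i ≠ 0) : degree hp (cg t p) = 1 := by
  simp [cg, degree_xg, hp]

def residue (i : Fin t) : L t p →ₗ[ℤ] ZMod (p i) :=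
  (rel t p).liftQ ((Int.castAddHom (ZMod (p i))).toIntLinearMap ∘ₗ LinearMap.proj i) (by
    rw [rel, Submodule.span_le]
    rintro _ ⟨j, rfl⟩
    by_cases h0 : i = 0 <;> by_cases hj : i = j <;> subst_eqs <;> simp_all)

theorem residue_xg (i j : Fin t) : residue i (xg t p j) = if i = j then 1 else 0 := by
  simp [residue, xg, Pi.single_apply]

theorem residue_cg (i : Fin t) : residue i (cg t p) = 0 := by
  rw [← natCast_smul_xg i, map_zsmul, residue_xg, if_pos rfl]
  simp

theorem sum_smul_xg_eq_iff {c : Fin t → ℕ} (hc : ∀ i, c i < p i) (m : Fin t → ℕ) (l : ℤ) :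
    ∑ i, (m i : ℤ) • xg t p i = l • cg t p + ∑ i, (c i : ℤ) • xg t p i ↔
      ∃ b : Fin t → ℕ, m = c + p * b ∧ ((∑ i, b i : ℕ) : ℤ) = l := by
  have hp : ∀ i, p i ≠ 0 := fun i => (hc i).ne_bot
  constructor
  · intro h
    have hmod : ∀ i, m i % p i = c i := by
      intro i
      have := congrArg (residue i) h
      simp [residue_xg, residue_cg] at this
      rw [← Nat.mod_eq_of_lt (hc i)]
      exact (ZMod.natCast_eq_natCast_iff' _ _ _).mp this
    obtain ⟨b, rfl⟩ : ∃ b, m = c + p * b :=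
      ⟨fun i => m i / p i, funext fun i => by simp [← hmod i, Nat.mod_add_div]⟩
    refine ⟨b, rfl, ?_⟩
    have hb : ∀ i, (p i * b i : ℚ) * (p i : ℚ)⁻¹ = b i := fun i => by
      have := hp i
      field_simp
    have := congrArg (degree hp) h
    simp [degree_xg, degree_cg, add_mul, Finset.sum_add_distrib] at this
    simp only [hb] at this
    exact_mod_cast add_left_cancel (this.trans (add_comm _ _))
  · rintro ⟨b, rfl, rfl⟩
    rw [Nat.cast_sum, Finset.sum_smul, ← Finset.sum_add_distrib]
    refine Finset.sum_congr rfl fun i _ => ?_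
    simp only [Pi.add_apply, Pi.mul_apply]
    push_cast
    rw [add_smul, mul_comm, mul_smul, natCast_smul_xg, add_comm]

end Grading

variable {t : ℕ} [NeZero t] (p : Fin t → ℕ)

section Forms

variable {k R : Type*} [CommSemiring k] [CommSemiring R] [Algebra k R]

def normalMonomial (w : Fin t → R) (c : Fin t → ℕ) (n : ℕ) (a : Fin (n + 1)) : R :=
  (∏ i, w i ^ c i) * ((w 0 ^ p 0) ^ (a : ℕ) * (w 1 ^ p 1) ^ (n - a))

theorem span_prod_pow_eq_span_normalMonomial {w : Fin t → R}
    (hw : ∀ i, w i ^ p i ∈ span k {w 0 ^ p 0, w 1 ^ p 1}) (c : Fin t → ℕ) (n : ℕ) :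
    span k {s | ∃ b : Fin t → ℕ, ∑ i, b i = n ∧ s = ∏ i, w i ^ (c i + p i * b i)} =
      span k (Set.range (normalMonomial p w c n)) := by
  apply le_antisymm
  · rw [span_le]
    rintro _ ⟨b, hb, rfl⟩
    rw [Finset.prod_pow_add_mul]
    have hpow := span_pair_pow_le (k := k) _ _ n
      (hb ▸ prod_pow_mem_pow_sum Finset.univ (fun i _ => hw i) b)
    have := mem_map_of_mem (f := LinearMap.mulLeft k (∏ i, w i ^ c i)) hpow
    rw [map_span, ← Set.range_comp] at this
    exact this
  · rw [span_le]
    rintro _ ⟨a, rfl⟩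
    refine subset_span ⟨Pi.single 0 a + Pi.single 1 (n - a), ?_, ?_⟩
    · simp [Finset.sum_add_distrib]
      omega
    · rw [Finset.prod_pow_add_mul, normalMonomial]
      simp only [Pi.add_apply, pow_add, Finset.prod_mul_distrib, Pi.single_apply, pow_ite,
        pow_zero, Finset.prod_ite_eq', Finset.mem_univ, if_true]

end Forms

theorem setOf_mk_prod_X_pow_eq {k : Type*} [CommRing k] (I : Ideal (MvPolynomial (Fin t) k))
    {c : Fin t → ℕ} (hc : ∀ i, c i < p i) (l : ℤ) :
    {s | ∃ m : Fin t → ℕ, ∑ i, (m i : ℤ) • xg t p i = l • cg t p + ∑ i, (c i : ℤ) • xg t p i ∧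
      s = Ideal.Quotient.mk I (∏ i, X i ^ m i)} =
    {s | ∃ b : Fin t → ℕ, ((∑ i, b i : ℕ) : ℤ) = l ∧
      s = ∏ i, Ideal.Quotient.mk I (X i) ^ (c i + p i * b i)} := by
  ext s
  simp only [sum_smul_xg_eq_iff hc, map_prod, map_pow]
  constructor
  · rintro ⟨_, ⟨b, rfl, hb⟩, rfl⟩
    exact ⟨b, hb, rfl⟩
  · rintro ⟨b, hb, rfl⟩
    exact ⟨_, ⟨b, rfl, hb⟩, rfl⟩

variable {k : Type*} [Field k] (lam : Fin t → k)

noncomputable def relIdeal : Ideal (MvPolynomial (Fin t) k) :=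
  Ideal.span { f | ∃ i : Fin t, 2 ≤ (i : ℕ) ∧
    f = X i ^ p i - X (0 : Fin t) ^ p 0 - C (lam i) * X (1 : Fin t) ^ p 1 }

theorem mk_X_pow_mem_span (i : Fin t) :
    Ideal.Quotient.mk (relIdeal p lam) (X i) ^ p i ∈
      span k {Ideal.Quotient.mk (relIdeal p lam) (X 0) ^ p 0,
        Ideal.Quotient.mk (relIdeal p lam) (X 1) ^ p 1} := by
  by_cases hi : 2 ≤ (i : ℕ)
  · have hrel : Ideal.Quotient.mk (relIdeal p lam) (X i ^ p i - X 0 ^ p 0 - C (lam i) * X 1 ^ p 1)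
        = 0 := Ideal.Quotient.eq_zero_iff_mem.mpr (Ideal.subset_span ⟨i, hi, rfl⟩)
    rw [← algebraMap_eq, map_sub, map_sub, map_mul, Ideal.Quotient.mk_algebraMap,
      ← Algebra.smul_def, sub_sub, sub_eq_zero, map_pow, map_pow, map_pow] at hrel
    rw [hrel]
    exact add_mem (subset_span (Set.mem_insert _ _))
      (smul_mem _ _ (subset_span (Set.mem_insert_of_mem _ rfl)))
  · obtain rfl | rfl : i = 0 ∨ i = 1 := by
      simpa [Fin.two_le_val_iff, or_iff_not_imp_left] using hi
    · exact subset_span (Set.mem_insert _ _)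
    · exact subset_span (Set.mem_insert_of_mem _ rfl)

theorem relIdeal_le_ker_aeval {K : Type*} [CommRing K] [Algebra k K] {x : Fin t → K}
    (hx : ∀ i : Fin t, 2 ≤ (i : ℕ) → x i ^ p i = x 0 ^ p 0 + algebraMap k K (lam i) * x 1 ^ p 1) :
    relIdeal p lam ≤ RingHom.ker (aeval x) := by
  rw [relIdeal, Ideal.span_le]
  rintro _ ⟨i, hi, rfl⟩
  simp [hx i hi]

theorem exists_point_relIdeal_le_ker_aeval {K : Type*} [Field K] [IsAlgClosed K] [Algebra k K]
    (h10 : (1 : Fin t) ≠ 0) (hp : ∀ i, p i ≠ 0) {A : K} (hA0 : A ≠ 0)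
    (hAlam : ∀ i, A + algebraMap k K (lam i) ≠ 0) :
    ∃ x : Fin t → K, (∀ i, x i ≠ 0) ∧ x 0 ^ p 0 = A ∧ x 1 ^ p 1 = 1 ∧
      relIdeal p lam ≤ RingHom.ker (aeval x) := by
  obtain ⟨x0, hx0⟩ := IsAlgClosed.exists_pow_nat_eq A (Nat.pos_of_ne_zero (hp 0))
  choose z hz using fun i =>
    IsAlgClosed.exists_pow_nat_eq (A + algebraMap k K (lam i)) (Nat.pos_of_ne_zero (hp i))
  refine ⟨fun i => if i = 0 then x0 else if i = 1 then 1 else z i, fun i => ?_, by simp [hx0],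
    by simp [h10], relIdeal_le_ker_aeval p lam fun i hi => ?_⟩
  · dsimp only
    split_ifs
    · rintro rfl
      exact hA0 (by rw [← hx0, zero_pow (hp 0)])
    · exact one_ne_zero
    · rintro h
      exact hAlam i (by rw [← hz i, h, zero_pow (hp i)])
  · obtain ⟨hi0, hi1⟩ := (Fin.two_le_val_iff i).mp hi
    simp [hi0, hi1, h10, hx0, hz]

theorem linearIndependent_normalMonomial (h10 : (1 : Fin t) ≠ 0) (hp : ∀ i, p i ≠ 0)
    (c : Fin t → ℕ) (n : ℕ) :
    LinearIndependent k
      (normalMonomial p (fun i => Ideal.Quotient.mk (relIdeal p lam) (X i)) c n) := by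
  let K := AlgebraicClosure k
  have hbad : (insert 0 (Set.range fun i => -algebraMap k K (lam i))).Finite :=
    (Set.finite_range _).insert 0
  refine linearIndependent_of_forall_mem_exists_eq_mul_pow _ hbad.infinite_compl fun A hA => ?_
  simp only [Set.mem_compl_iff, Set.mem_insert_iff, Set.mem_range, not_or, not_exists] at hA
  obtain ⟨x, hx, hx0, hx1, hrel⟩ := exists_point_relIdeal_le_ker_aeval p lam h10 hp hA.1
    fun i h => hA.2 i (eq_neg_of_add_eq_zero_left h).symm
  let φ := Ideal.Quotient.liftₐ (relIdeal p lam) (aeval x) fun f hf => hrel hf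
  have hφ : ∀ i, φ (Ideal.Quotient.mk (relIdeal p lam) (X i)) = x i := fun i =>
    (Ideal.Quotient.lift_mk _ _ _).trans (aeval_X x i)
  refine ⟨φ.toLinearMap, ∏ i, x i ^ c i,
    Finset.prod_ne_zero_iff.mpr fun i _ => pow_ne_zero _ (hx i), fun a => ?_⟩
  simp [normalMonomial, hφ, hx0, hx1]

theorem finrank_span_prod_mk_X_pow (h10 : (1 : Fin t) ≠ 0) (hp : ∀ i, p i ≠ 0) (c : Fin t → ℕ)
    (n : ℕ) :
    Module.finrank k (span k {s | ∃ b : Fin t → ℕ, ∑ i, b i = n ∧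
      s = ∏ i, Ideal.Quotient.mk (relIdeal p lam) (X i) ^ (c i + p i * b i)}) = n + 1 := by
  rw [span_prod_pow_eq_span_normalMonomial p
      (w := fun i => Ideal.Quotient.mk (relIdeal p lam) (X i)) (mk_X_pow_mem_span p lam),
    finrank_span_eq_card (linearIndependent_normalMonomial p lam h10 hp c n), Fintype.card_fin]

end WPL

open WPL in
theorem graded_component_dimension_general
    (t : ℕ) [NeZero t] (ht : 3 ≤ t) (p : Fin t → ℕ)
    (k : Type*) [Field k] (lam : Fin t → k)
    (Icl : Ideal (MvPolynomial (Fin t) k))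
    (hIcl : Icl = Ideal.span { f | ∃ i : Fin t, 2 ≤ (i : ℕ) ∧
        f = MvPolynomial.X i ^ p i - MvPolynomial.X (0 : Fin t) ^ p 0
            - MvPolynomial.C (lam i) * MvPolynomial.X (1 : Fin t) ^ p 1 })
    (y : L t p) (l : ℤ) (coef : Fin t → ℤ)
    (hcoef : ∀ i, 0 ≤ coef i ∧ coef i ≤ (p i : ℤ) - 1)
    (hy : y = l • cg t p + ∑ i, coef i • xg t p i)
    (V : Submodule k (MvPolynomial (Fin t) k ⧸ Icl))
    (hV : V = Submodule.span k { s | ∃ m : Fin t → ℕ,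
        (∑ i, (m i : ℤ) • xg t p i) = y ∧
        s = Ideal.Quotient.mk Icl (∏ i, MvPolynomial.X i ^ m i) }) :
    (0 ≤ l → Module.finrank k V = l.toNat + 1) ∧ (l < 0 → V = ⊥) := by
  obtain rfl : Icl = relIdeal p lam := hIcl
  subst hy
  lift coef to Fin t → ℕ using fun i => (hcoef i).1
  have hc : ∀ i, coef i < p i := fun i => by have := (hcoef i).2; dsimp only at this; omega
  replace hV := hV.trans (congrArg (span k) (setOf_mk_prod_X_pow_eq p _ hc l))
  refine ⟨fun hl => ?_, fun hl => ?_⟩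
  · lift l to ℕ using hl
    have h10 : (1 : Fin t) ≠ 0 := by
      rw [Ne, Fin.ext_iff, Fin.val_one', Fin.val_zero, Nat.mod_eq_of_lt (by omega)]
      omega
    simp only [Int.natCast_inj] at hV
    rw [hV, finrank_span_prod_mk_X_pow p lam h10 (fun i => (hc i).ne_bot), Int.toNat_natCast]
  · rw [hV, Submodule.span_eq_bot]
    rintro _ ⟨b, hb, -⟩
    omega

open WPL in
/-- the graded component `S_{y⃗}` of
`S = k[X₁,…,X_t]/(Xᵢ^{pᵢ} - X₁^{p₁} - λᵢ X₂^{p₂})`, i.e. the `k`-span in `S`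
of the residue classes of monomials of degree `y⃗`, has dimension `l + 1`
if `l ≥ 0`, and is zero if `l < 0`, where `y⃗ = l c⃗ + ∑ lᵢ x⃗ᵢ` is the
normal form of `y⃗`. -/
theorem graded_component_dimension
    (t : ℕ) [NeZero t] (ht : 3 ≤ t) (p : Fin t → ℕ) (hp : ∀ i, 2 ≤ p i)
    (k : Type*) [Field k] (lam : Fin t → k)
    (hlam0 : ∀ i : Fin t, 2 ≤ (i : ℕ) → lam i ≠ 0)
    (hlam : ∀ i j : Fin t, 2 ≤ (i : ℕ) → 2 ≤ (j : ℕ) → i ≠ j → lam i ≠ lam j)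
    (Icl : Ideal (MvPolynomial (Fin t) k))
    (hIcl : Icl = Ideal.span { f | ∃ i : Fin t, 2 ≤ (i : ℕ) ∧
        f = MvPolynomial.X i ^ p i - MvPolynomial.X (0 : Fin t) ^ p 0
            - MvPolynomial.C (lam i) * MvPolynomial.X (1 : Fin t) ^ p 1 })
    (y : L t p) (l : ℤ) (coef : Fin t → ℤ)
    (hcoef : ∀ i, 0 ≤ coef i ∧ coef i ≤ (p i : ℤ) - 1)
    (hy : y = l • cg t p + ∑ i, coef i • xg t p i)
    (V : Submodule k (MvPolynomial (Fin t) k ⧸ Icl))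
    (hV : V = Submodule.span k { s | ∃ m : Fin t → ℕ,
        (∑ i, (m i : ℤ) • xg t p i) = y ∧
        s = Ideal.Quotient.mk Icl (∏ i, MvPolynomial.X i ^ m i) }) :
    (0 ≤ l → Module.finrank k V = l.toNat + 1) ∧ (l < 0 → V = ⊥) :=
  graded_component_dimension_general t ht p k lam Icl hIcl y l coef hcoef hy V hV
end
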